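/- arXiv:2002.05367 — 9 statements merged into one kernel-verified Lean document; each statement's English description precedes it below -/
import Mathlib

section
/- Let S ⊆ Y = P^{n_1} × ... × P^{n_k} be a nondegenerate circuit with #S = 4. Then either k = 1 and n_1 = 2, or k = 2 and n_1 = n_2 = 1. -/
open scoped LinearAlgebra.Projectivization
open Projectivization

/-- The multiprojective space `Y = P^{n 0} × ... × P^{n (k-1)}` over `K`,
where `P^m = P(K^{m+1})`. -/
abbrev MultiProj (K : Type*) [Field K] {k : ℕ} (n : Fin k → ℕ) :=
  ∀ i : Fin k, ℙ K (Fin (n i + 1) → K)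

/-- A vector representative of the Segre image `ν(x)` of a point `x ∈ Y`:
the tensor product of representatives of the coordinates. -/
noncomputable def segreVec {K : Type*} [Field K] {k : ℕ} {n : Fin k → ℕ}
    (x : MultiProj K n) : PiTensorProduct K (fun i : Fin k => Fin (n i + 1) → K) :=
  PiTensorProduct.tprod K (fun i => (x i).rep)

/-- `e(S) = #S − 1 − dim⟨ν(S)⟩`, computed as `#S` minus the rank of the linear span
of vector representatives of `ν(S)`. -/
noncomputable def eSet {K : Type*} [Field K] {k : ℕ} {n : Fin k → ℕ}
    (S : Set (MultiProj K n)) : ℕ :=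
  S.ncard - Module.finrank K ↥(Submodule.span K (segreVec '' S))

/-- `S ⊆ Y` is nondegenerate: `π i '' S` spans `P^{n i}` for every `i`. -/
def Nondeg {K : Type*} [Field K] {k : ℕ} {n : Fin k → ℕ}
    (S : Set (MultiProj K n)) : Prop :=
  ∀ i : Fin k, Submodule.span K ((fun x => (x i).rep) '' S) = ⊤

/-- For products of `P^1`'s: `S` is nondegenerate iff each projection has ≥ 2 points. -/
def NondegPts {K : Type*} [Field K] {k : ℕ} {n : Fin k → ℕ}
    (S : Set (MultiProj K n)) : Prop :=
  ∀ i : Fin k, ∃ p ∈ S, ∃ q ∈ S, p i ≠ q i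

/-- `S` is a circuit: linearly dependent, but every proper subset is linearly independent. -/
def IsCircuit {K : Type*} [Field K] {k : ℕ} {n : Fin k → ℕ}
    (S : Set (MultiProj K n)) : Prop :=
  0 < eSet S ∧ ∀ S' : Set (MultiProj K n), S' ⊂ S → eSet S' = 0

/-- `q ∈ P^r` equals `ν(s)` for the point `s ∈ Y`. -/
def IsSegreOf {K : Type*} [Field K] {k : ℕ} {n : Fin k → ℕ}
    (q : ℙ K (PiTensorProduct K (fun i : Fin k => Fin (n i + 1) → K)))
    (s : MultiProj K n) : Prop :=
  ∃ c : K, q.rep = c • segreVec s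

/-- `q ∈ P^r` lies on the Segre variety `ν(Y)`. -/
def InSegre {K : Type*} [Field K] {k : ℕ} {n : Fin k → ℕ}
    (q : ℙ K (PiTensorProduct K (fun i : Fin k => Fin (n i + 1) → K))) : Prop :=
  ∃ y : MultiProj K n, IsSegreOf q y

/-- `S` is minimal: there is no projective line `L ⊆ P^r` contained in the Segre variety
`ν(Y)` meeting `ν(S)` in at least two points. -/
def IsMinimal {K : Type*} [Field K] {k : ℕ} {n : Fin k → ℕ}
    (S : Set (MultiProj K n)) : Prop :=
  ¬ ∃ W : Submodule K (PiTensorProduct K (fun i : Fin k => Fin (n i + 1) → K)),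
      Module.finrank K ↥W = 2 ∧
      (∀ x : ℙ K (PiTensorProduct K (fun i : Fin k => Fin (n i + 1) → K)),
        x.rep ∈ W → InSegre x) ∧
      ∃ x₁ x₂ : ℙ K (PiTensorProduct K (fun i : Fin k => Fin (n i + 1) → K)),
        x₁ ≠ x₂ ∧ x₁.rep ∈ W ∧ x₂.rep ∈ W ∧
        (∃ s₁ ∈ S, IsSegreOf x₁ s₁) ∧ (∃ s₂ ∈ S, IsSegreOf x₂ s₂)

/-- The `X`-rank of a point `q ∈ P^r`: the minimal cardinality of a finite `A ⊆ Y`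
with `q ∈ ⟨ν(A)⟩`. -/
noncomputable def xRank {K : Type*} [Field K] {k : ℕ} {n : Fin k → ℕ}
    (q : ℙ K (PiTensorProduct K (fun i : Fin k => Fin (n i + 1) → K))) : ℕ :=
  sInf {m : ℕ | ∃ A : Set (MultiProj K n), A.Finite ∧ A.ncard = m ∧
    q.rep ∈ Submodule.span K (segreVec '' A)}


/-! Proof idea. Write `S = {p₀, …, p₃}`. Being a circuit, `S` carries a relation
`∑ cⱼ ν(pⱼ) = 0` with all `cⱼ ≠ 0`. Evaluating it on a product `φ₁ ⊗ ⋯ ⊗ φₖ` of linear forms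
gives `∑ cⱼ ∏ₗ φₗ(pⱼₗ) = 0`, so no such product vanishes at all points of `S` but one.
Choosing the `φₗ` to kill prescribed coordinates of the `pⱼ` yields: the four coordinates in a
factor are dependent, so `n i ≤ 2`; if `n i = 2`, any two points agree in every other factor,
so `k = 1`; and if `k ≥ 3`, two points agreeing in one factor are forced to coincide, while
points pairwise distinct in every factor are forced to agree in a third one. -/

open Module Function Submodule

namespace Projectivization

variable {K V : Type*} [Field K] [AddCommGroup V] [Module K V]

theorem rep_mem_span_singleton_rep_iff {x y : ℙ K V} : y.rep ∈ K ∙ x.rep ↔ y = x := by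
  rw [mem_span_singleton]
  refine ⟨fun ⟨a, ha⟩ => ?_, fun h => ⟨1, by rw [h, one_smul]⟩⟩
  rw [← x.mk_rep, ← y.mk_rep]
  exact (mk_eq_mk_iff' K _ _ _ _).2 ⟨a, ha⟩

theorem exists_dual_apply_rep_eq_zero_ne_zero {x y : ℙ K V} (h : x ≠ y) :
    ∃ φ : Dual K V, φ x.rep = 0 ∧ φ y.rep ≠ 0 := by
  obtain ⟨φ, hφy, hφx⟩ := exists_le_ker_of_notMem
    (rep_mem_span_singleton_rep_iff.not.2 (Ne.symm h))
  exact ⟨φ, hφx (mem_span_singleton_self _), hφy⟩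

theorem exists_ne_of_span_rep_eq_top {ι : Type*} {y : ι → ℙ K V}
    (hspan : span K (Set.range fun j => (y j).rep) = ⊤) (hV : 1 < finrank K V) (x : ℙ K V) :
    ∃ j, y j ≠ x := by
  by_contra! hx
  have hle : span K (Set.range fun j => (y j).rep) ≤ x.submodule := by
    rw [submodule_eq, span_le]
    rintro _ ⟨j, rfl⟩
    exact hx j ▸ mem_span_singleton_self _
  rw [hspan, top_le_iff] at hle
  have := x.finrank_submodule
  rw [hle, finrank_top] at this
  omega

end Projectivization

theorem exists_sum_smul_eq_zero_of_forall_linearIndependent_ne {R M ι : Type*} [Ring R]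
    [AddCommGroup M] [Module R M] [Fintype ι] [DecidableEq ι] {v : ι → M}
    (hv : ¬ LinearIndependent R v)
    (hv' : ∀ j, LinearIndependent R fun i : {i // i ≠ j} => v i.1) :
    ∃ c : ι → R, (∀ j, c j ≠ 0) ∧ ∑ j, c j • v j = 0 := by
  obtain ⟨c, hc, j₀, hj₀⟩ := Fintype.not_linearIndependent_iff.mp hv
  refine ⟨c, fun j hj => hj₀ ?_, hc⟩
  have hsub : ∑ i : {i // i ≠ j}, c i • v i.1 = 0 := by
    rw [← hc, Fintype.sum_eq_add_sum_subtype_ne _ j, hj, zero_smul, zero_add]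
  by_cases h : j₀ = j
  · exact h ▸ hj
  · exact Fintype.linearIndependent_iff.mp (hv' j) _ hsub ⟨j₀, h⟩

theorem Set.Finite.exists_injective_fin_range_eq {α : Type*} {s : Set α} (hs : s.Finite)
    {m : ℕ} (hm : s.ncard = m) : ∃ p : Fin m → α, Injective p ∧ Set.range p = s := by
  subst hm
  let e := hs.toFinset.equivFinOfCardEq (Set.ncard_eq_toFinset_card s hs).symm
  refine ⟨fun j => e.symm j, Subtype.val_injective.comp e.symm.injective, ?_⟩
  ext x
  refine ⟨fun ⟨j, hj⟩ => hj ▸ hs.mem_toFinset.1 (e.symm j).2, fun hx => ?_⟩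
  exact ⟨e ⟨x, hs.mem_toFinset.2 hx⟩, by simp⟩

theorem update_apply_ne_zero {K κ : Type*} [Field K] [DecidableEq κ] {V : κ → Type*}
    [∀ l, AddCommGroup (V l)] [∀ l, Module K (V l)] {σ : ∀ l, Dual K (V l)} {x : ∀ l, V l}
    (hσ : ∀ l, σ l (x l) ≠ 0) {i : κ} {φ : Dual K (V i)} (hφ : φ (x i) ≠ 0) (l : κ) :
    update σ i φ l (x l) ≠ 0 := by
  rcases eq_or_ne l i with rfl | hl
  · rwa [update_self]
  · rw [update_of_ne hl]
    exact hσ l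

section Segre

variable {K : Type*} [Field K] {k : ℕ} {n : Fin k → ℕ} {ι : Type*} [Fintype ι]

theorem exists_dual_forall_apply_rep_ne_zero (x : MultiProj K n) :
    ∃ σ : ∀ l, Dual K (Fin (n l + 1) → K), ∀ l, σ l (x l).rep ≠ 0 := by
  choose σ hσ using fun l => Projective.exists_dual_ne_zero K (x l).rep_nonzero
  exact ⟨σ, hσ⟩

theorem eSet_range_eq_zero_iff {p : ι → MultiProj K n} (hp : Injective p) :
    eSet (Set.range p) = 0 ↔ LinearIndependent K (segreVec ∘ p) := by
  have hle := finrank_range_le_card (R := K) (segreVec ∘ p)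
  rw [eSet, linearIndependent_iff_card_eq_finrank_span, Set.ncard_range_of_injective hp,
    Nat.card_eq_fintype_card, ← Set.range_comp]
  rw [Set.finrank] at hle ⊢
  omega

theorem IsCircuit.linearIndependent_ne {p : ι → MultiProj K n} (hp : Injective p)
    (h : IsCircuit (Set.range p)) (j : ι) :
    LinearIndependent K fun i : {i // i ≠ j} => segreVec (p i) := by
  classical
  refine (eSet_range_eq_zero_iff (hp.comp Subtype.val_injective)).1 (h.2 _ ⟨?_, fun hsub => ?_⟩)
  · rintro _ ⟨i, rfl⟩
    exact ⟨i, rfl⟩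
  · obtain ⟨i, hi⟩ := hsub ⟨j, rfl⟩
    exact i.2 (hp hi)

def HasNowhereZeroRelation (p : ι → MultiProj K n) : Prop :=
  ∃ c : ι → K, (∀ j, c j ≠ 0) ∧ ∑ j, c j • segreVec (p j) = 0

theorem IsCircuit.hasNowhereZeroRelation {p : ι → MultiProj K n} (hp : Injective p)
    (h : IsCircuit (Set.range p)) : HasNowhereZeroRelation p := by
  classical
  exact exists_sum_smul_eq_zero_of_forall_linearIndependent_ne
    (fun hli => h.1.ne' ((eSet_range_eq_zero_iff hp).2 hli)) (h.linearIndependent_ne hp)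

namespace HasNowhereZeroRelation

variable {p : ι → MultiProj K n}

theorem exists_ne_forall_apply_ne_zero (h : HasNowhereZeroRelation p)
    {φ : ∀ l, Dual K (Fin (n l + 1) → K)} {d : ι} (hd : ∀ l, φ l (p d l).rep ≠ 0) :
    ∃ j ≠ d, ∀ l, φ l (p j l).rep ≠ 0 := by
  obtain ⟨c, hc, hrel⟩ := h
  by_contra! hzero
  have hsum := congr(PiTensorProduct.dualDistrib (⨂ₜ[K] l, φ l) $hrel)
  simp only [map_sum, map_smul, segreVec, PiTensorProduct.dualDistrib_apply, map_zero,
    smul_eq_mul] at hsum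
  rw [Fintype.sum_eq_single d fun j hj => ?_] at hsum
  · exact mul_ne_zero (hc d) (Finset.prod_ne_zero_iff.2 fun l _ => hd l) hsum
  · obtain ⟨l, hl⟩ := hzero j hj
    rw [Finset.prod_eq_zero (Finset.mem_univ l) hl, mul_zero]

theorem apply_rep_eq_zero_of_forall_ne (h : HasNowhereZeroRelation p) {i : Fin k}
    {φ : Dual K (Fin (n i + 1) → K)} {d : ι} (hφ : ∀ j ≠ d, φ (p j i).rep = 0) :
    φ (p d i).rep = 0 := by
  by_contra hd
  obtain ⟨σ, hσ⟩ := exists_dual_forall_apply_rep_ne_zero (p d)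
  obtain ⟨j, hjd, hj⟩ := h.exists_ne_forall_apply_ne_zero (update_apply_ne_zero hσ hd)
  simpa [hφ j hjd] using hj i

theorem eq_of_forall_ne_exists_apply_eq_zero (h : HasNowhereZeroRelation p)
    {φ : ∀ m, Dual K (Fin (n m + 1) → K)} {c d : ι} {l : Fin k}
    (hc : ∀ m, φ m (p c m).rep ≠ 0)
    (hφ : ∀ j, j ≠ c → j ≠ d → ∃ m ≠ l, φ m (p j m).rep = 0) : p c l = p d l := by
  by_contra hcd
  obtain ⟨ψ, hψd, hψc⟩ := exists_dual_apply_rep_eq_zero_ne_zero (Ne.symm hcd)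
  obtain ⟨j, hjc, hj⟩ := h.exists_ne_forall_apply_ne_zero (update_apply_ne_zero hc hψc)
  have hjd : j ≠ d := by
    rintro rfl
    simpa [hψd] using hj l
  obtain ⟨m, hml, hm⟩ := hφ j hjc hjd
  simpa [update_of_ne hml, hm] using hj m

theorem eq_of_forall_ne_ne (h : HasNowhereZeroRelation p) {i : Fin k}
    {φ : Dual K (Fin (n i + 1) → K)} {c d : ι} (hc : φ (p c i).rep ≠ 0)
    (hφ : ∀ j, j ≠ c → j ≠ d → φ (p j i).rep = 0) {l : Fin k} (hl : l ≠ i) : p c l = p d l := by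
  obtain ⟨σ, hσ⟩ := exists_dual_forall_apply_rep_ne_zero (p c)
  refine h.eq_of_forall_ne_exists_apply_eq_zero (update_apply_ne_zero hσ hc)
    fun j hjc hjd => ⟨i, hl.symm, ?_⟩
  simpa using hφ j hjc hjd

theorem eq_of_ne_of_ne (h : HasNowhereZeroRelation p) {a₁ a₂ c d : ι}
    (hcover : ∀ j, j ≠ c → j ≠ d → j = a₁ ∨ j = a₂) {i₁ i₂ l : Fin k} (h₁₂ : i₁ ≠ i₂)
    (h₁ : i₁ ≠ l) (h₂ : i₂ ≠ l) (ha₁ : p a₁ i₁ ≠ p c i₁) (ha₂ : p a₂ i₂ ≠ p c i₂) :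
    p c l = p d l := by
  obtain ⟨φ₁, hφ₁a, hφ₁c⟩ := exists_dual_apply_rep_eq_zero_ne_zero ha₁
  obtain ⟨φ₂, hφ₂a, hφ₂c⟩ := exists_dual_apply_rep_eq_zero_ne_zero ha₂
  obtain ⟨σ, hσ⟩ := exists_dual_forall_apply_rep_ne_zero (p c)
  refine h.eq_of_forall_ne_exists_apply_eq_zero
    (update_apply_ne_zero (update_apply_ne_zero hσ hφ₁c) hφ₂c) fun j hjc hjd => ?_
  rcases hcover j hjc hjd with rfl | rfl
  · exact ⟨i₁, h₁, by simpa [update_of_ne h₁₂] using hφ₁a⟩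
  · exact ⟨i₂, h₂, by simpa using hφ₂a⟩

theorem add_one_lt_card (h : HasNowhereZeroRelation p) {i : Fin k}
    (hspan : span K (Set.range fun j => (p j i).rep) = ⊤) : n i + 1 < Fintype.card ι := by
  have hfin : (Set.range fun j => (p j i).rep).finrank K = n i + 1 := by
    rw [Set.finrank, hspan, finrank_top, finrank_fin_fun]
  refine lt_of_le_of_ne (hfin ▸ finrank_range_le_card _) fun hcard => ?_
  have hli : LinearIndependent K fun j => (p j i).rep := by
    rw [linearIndependent_iff_card_eq_finrank_span, hfin, hcard]
  obtain ⟨d⟩ : Nonempty ι := Fintype.card_pos_iff.1 (by omega)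
  obtain ⟨φ, hφd, hφ⟩ := exists_le_ker_of_notMem
    (hli.notMem_span_image (s := {d}ᶜ) (x := d) (by simp))
  exact hφd (h.apply_rep_eq_zero_of_forall_ne fun j hj => hφ (subset_span ⟨j, hj, rfl⟩))

theorem eq_of_span_ne_top (h : HasNowhereZeroRelation p) {i : Fin k}
    (hspan : span K (Set.range fun j => (p j i).rep) = ⊤) {c d : ι}
    (hW : span K (Set.range fun j : {j // j ≠ c ∧ j ≠ d} => (p j i).rep) ≠ ⊤)
    {l : Fin k} (hl : l ≠ i) : p c l = p d l := by
  set W := span K (Set.range fun j : {j // j ≠ c ∧ j ≠ d} => (p j i).rep)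
  have hmem : ∀ j, j ≠ c → j ≠ d → (p j i).rep ∈ W := fun j hjc hjd =>
    subset_span ⟨⟨j, hjc, hjd⟩, rfl⟩
  have hkill : ∀ {c' d'}, (p c' i).rep ∉ W → (∀ j, j ≠ c' → j ≠ d' → (p j i).rep ∈ W) →
      p c' l = p d' l := fun hc hW => by
    obtain ⟨φ, hφc, hφW⟩ := exists_le_ker_of_notMem hc
    exact h.eq_of_forall_ne_ne hφc (fun j hjc hjd => hφW (hW j hjc hjd)) hl
  by_cases hc : (p c i).rep ∈ W
  · refine (hkill (c' := d) (fun hd => hW (eq_top_iff.2 (hspan ▸ span_le.2 ?_)))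
      fun j hjd hjc => hmem j hjc hjd).symm
    rintro _ ⟨j, rfl⟩
    by_cases hjc : j = c
    · exact hjc ▸ hc
    by_cases hjd : j = d
    · exact hjd ▸ hd
    exact hmem j hjc hjd
  · exact hkill hc hmem

theorem not_forall_ne_eq (h : HasNowhereZeroRelation p) {i : Fin k}
    (hspan : span K (Set.range fun j => (p j i).rep) = ⊤) (hn : 0 < n i) (d : ι)
    (x : ℙ K (Fin (n i + 1) → K)) : ¬ ∀ j ≠ d, p j i = x := by
  intro hx
  have hdx : p d i ≠ x := by
    obtain ⟨j, hj⟩ := exists_ne_of_span_rep_eq_top hspan (by simpa) x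
    refine fun hd => hj ?_
    by_cases hjd : j = d
    · exact hjd ▸ hd
    · exact hx j hjd
  obtain ⟨φ, hφx, hφd⟩ := exists_dual_apply_rep_eq_zero_ne_zero (Ne.symm hdx)
  exact hφd (h.apply_rep_eq_zero_of_forall_ne fun j hj => hx j hj ▸ hφx)

theorem eq_of_eq_of_cover (h : HasNowhereZeroRelation p) {i : Fin k}
    (hspan : span K (Set.range fun j => (p j i).rep) = ⊤) (hn : 0 < n i) {a b c d : ι}
    (hcover : ∀ j, j = a ∨ j = b ∨ j = c ∨ j = d) (hab : p a i = p b i) {l : Fin k}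
    (hl : l ≠ i) : p c l = p d l := by
  have hac : p a i ≠ p c i := fun hac => h.not_forall_ne_eq hspan hn d (p a i) fun j hjd => by
    rcases hcover j with rfl | rfl | rfl | rfl
    · rfl
    · exact hab.symm
    · exact hac.symm
    · exact absurd rfl hjd
  obtain ⟨φ, hφa, hφc⟩ := exists_dual_apply_rep_eq_zero_ne_zero hac
  refine h.eq_of_forall_ne_ne hφc (fun j hjc hjd => ?_) hl
  rcases hcover j with rfl | rfl | rfl | rfl
  · exact hφa
  · exact hab ▸ hφa
  · exact absurd rfl hjc
  · exact absurd rfl hjd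

theorem apply_ne_of_cover (h : HasNowhereZeroRelation p) (hp : Injective p)
    (hspan : ∀ i, span K (Set.range fun j => (p j i).rep) = ⊤) (hn : ∀ i, 0 < n i)
    (hk : 2 < k) {a b c d : ι} (hcover : ∀ j, j = a ∨ j = b ∨ j = c ∨ j = d) (hab : a ≠ b)
    (i : Fin k) : p a i ≠ p b i := by
  intro hi
  obtain ⟨l, hli, -⟩ := Fin.exists_ne_and_ne_of_two_lt i i hk
  obtain ⟨l', hl'i, hl'l⟩ := Fin.exists_ne_and_ne_of_two_lt i l hk
  have hcover' : ∀ j, j = c ∨ j = d ∨ j = a ∨ j = b := fun j => by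
    rcases hcover j with hj | hj | hj | hj <;> simp [hj]
  -- `p c` and `p d` agree off the slot `i`, so `p a` and `p b` agree off `l` and off `l'`.
  have hab_off : ∀ m ≠ i, ∀ m' ≠ m, p a m' = p b m' := fun m hm _ hm' =>
    h.eq_of_eq_of_cover (hspan m) (hn m) hcover'
      (h.eq_of_eq_of_cover (hspan i) (hn i) hcover hi hm) hm'
  refine hab (hp (funext fun m => ?_))
  by_cases hm : m = l
  · exact hab_off l' hl'i m (hm ▸ hl'l.symm)
  · exact hab_off l hli m hm

end HasNowhereZeroRelation

theorem HasNowhereZeroRelation.ne_two {p : Fin 4 → MultiProj K n}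
    (h : HasNowhereZeroRelation p) (hspan : ∀ i, span K (Set.range fun j => (p j i).rep) = ⊤)
    {i l : Fin k} (hl : l ≠ i) (hn : 0 < n l) : n i ≠ 2 := by
  intro hni
  have hcard : ∀ c d : Fin 4, c ≠ d → Fintype.card {j // j ≠ c ∧ j ≠ d} = 2 := by decide
  have hW : ∀ c d : Fin 4, c ≠ d →
      span K (Set.range fun j : {j // j ≠ c ∧ j ≠ d} => (p j i).rep) ≠ ⊤ := by
    intro c d hcd htop
    have := finrank_range_le_card (R := K) fun j : {j : Fin 4 // j ≠ c ∧ j ≠ d} => (p j i).rep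
    rw [Set.finrank, htop, finrank_top, finrank_fin_fun, hcard c d hcd, hni] at this
    omega
  obtain ⟨j, hj⟩ := exists_ne_of_span_rep_eq_top (hspan l) (by simpa) (p 3 l)
  by_cases hj3 : j = 3
  · exact hj (hj3 ▸ rfl)
  · exact hj (h.eq_of_span_ne_top (hspan i) (hW j 3 hj3) hl)

theorem HasNowhereZeroRelation.lt_three {p : Fin 4 → MultiProj K n}
    (h : HasNowhereZeroRelation p) (hp : Injective p)
    (hspan : ∀ i, span K (Set.range fun j => (p j i).rep) = ⊤) (hn : ∀ i, 0 < n i) : k < 3 := by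
  by_contra! hk
  by_cases hpair : ∃ i a b, a ≠ b ∧ p a i = p b i
  · obtain ⟨i, a, b, hab, hi⟩ := hpair
    have hcover : ∀ a b : Fin 4, a ≠ b → ∃ c d, ∀ j, j = a ∨ j = b ∨ j = c ∨ j = d := by
      decide
    obtain ⟨c, d, hcover⟩ := hcover a b hab
    exact h.apply_ne_of_cover hp hspan hn hk hcover hab i hi
  · push Not at hpair
    refine hpair ⟨2, hk⟩ 2 3 (by decide) (h.eq_of_ne_of_ne (a₁ := 0) (a₂ := 1) (by decide)
      (i₁ := ⟨0, by omega⟩) (i₂ := ⟨1, by omega⟩) ?_ ?_ ?_ (hpair _ 0 2 (by decide))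
      (hpair _ 1 2 (by decide))) <;> simp [Fin.ext_iff]

theorem IsCircuit.two_le_of_fin_one {n : Fin 1 → ℕ} {p : Fin 4 → MultiProj K n}
    (hp : Injective p) (h : IsCircuit (Set.range p)) : 2 ≤ n 0 := by
  have hli := (h.linearIndependent_ne hp 0).map' _ (PiTensorProduct.subsingletonEquiv 0).ker
  have := hli.fintype_card_le_finrank
  simp only [ne_eq, Fintype.card_subtype_compl, Fintype.card_fin, Fintype.card_unique,
    finrank_fin_fun] at this
  omega

end Segre

theorem segre_circuit_card_four_classification_general
    {K : Type*} [Field K] {k : ℕ} {n : Fin k → ℕ}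
    (hn : ∀ i, 0 < n i)
    (S : Set (MultiProj K n)) (hSfin : S.Finite) (hScard : S.ncard = 4)
    (hnd : Nondeg S) (hcirc : IsCircuit S) :
    (k = 1 ∧ ∀ i, n i = 2) ∨ (k = 2 ∧ ∀ i, n i = 1) := by
  obtain ⟨p, hp, rfl⟩ := hSfin.exists_injective_fin_range_eq hScard
  have h := hcirc.hasNowhereZeroRelation hp
  have hspan : ∀ i, span K (Set.range fun j => (p j i).rep) = ⊤ := fun i => by
    rw [← hnd i, ← Set.range_comp]
    rfl
  have hle : ∀ i, n i ≤ 2 := fun i => by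
    have := h.add_one_lt_card (hspan i)
    simp only [Fintype.card_fin] at this
    omega
  obtain rfl | rfl | rfl | hk : k = 0 ∨ k = 1 ∨ k = 2 ∨ 3 ≤ k := by omega
  · exact absurd (hp (Subsingleton.elim (p 0) (p 1))) (by decide)
  · refine .inl ⟨rfl, fun i => ?_⟩
    rw [Fin.fin_one_eq_zero i]
    exact (hle 0).antisymm (hcirc.two_le_of_fin_one hp)
  · refine .inr ⟨rfl, fun i => ?_⟩
    obtain ⟨l, hl⟩ := Fintype.exists_ne_of_one_lt_card (by simp) i
    have := h.ne_two hspan hl (hn l)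
    have := hle i
    have := hn i
    omega
  · exact absurd (h.lt_three hp hspan hn) (by omega)

theorem segre_circuit_card_four_classification
    {K : Type*} [Field K] {k : ℕ} {n : Fin k → ℕ}
    (hk : 0 < k) (hn : ∀ i, 0 < n i)
    (S : Set (MultiProj K n)) (hSfin : S.Finite) (hScard : S.ncard = 4)
    (hnd : Nondeg S) (hcirc : IsCircuit S) :
    (k = 1 ∧ ∀ i, n i = 2) ∨ (k = 2 ∧ ∀ i, n i = 1) :=
  segre_circuit_card_four_classification_general hn S hSfin hScard hnd hcirc
end

section
/- Let S ⊆ Y = P^{n_1} × ... × P^{n_k} be a circuit with #S = 4 and let A ⊆ S with #A = 2. Then the intersection ⟨ν(A)⟩ ∩ ⟨ν(S \ A)⟩ consists of exactly one point q, this point q does not lie in ν(S), and if moreover q does not lie in ν(Y), then the X-rank of q equals 2. -/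
open scoped LinearAlgebra.Projectivization
open Projectivization

/-!
Every proper subset of the circuit `S` has linearly independent Segre image, so `⟨ν(S)⟩` has
vector-space dimension `#S - 1`, and Grassmann's formula makes `⟨ν(A)⟩ ∩ ⟨ν(S \ A)⟩` a line,
i.e. a single projective point `q`. If `q = ν(s)` with, say, `s ∈ A`, then
`ν(s) ∈ ⟨ν(S \ A)⟩`, so the proper subset `{s} ∪ (S \ A)` of `S` would be dependent; this
needs `#A ≥ 2`. Finally `q ∈ ⟨ν(A)⟩` bounds the `X`-rank by 2, and rank at most 1 would put
`q` on `ν(Y)`.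
-/

theorem finrank_span_le_ncard {K V : Type*} [Field K] [AddCommGroup V] [Module K V]
    {s : Set V} (hs : s.Finite) : Module.finrank K (Submodule.span K s) ≤ s.ncard := by
  have := hs.fintype
  rw [Set.ncard_eq_toFinset_card']
  exact finrank_span_le_card s

theorem Projectivization.setOf_rep_mem_eq_singleton {K V : Type*} [Field K] [AddCommGroup V]
    [Module K V] {W : Submodule K V} (hW : Module.finrank K W = 1) :
    {x : ℙ K V | x.rep ∈ W} = {mk'' W hW} := by
  have : FiniteDimensional K W := Module.finite_of_finrank_pos (by omega)
  ext x
  rw [Set.mem_ofPred_eq, Set.mem_singleton_iff, ← Submodule.span_singleton_le_iff_mem,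
    ← submodule_eq, ← (submodule_injective (K := K) (V := V)).eq_iff, submodule_mk'']
  exact ⟨fun h => Submodule.eq_of_le_of_finrank_eq h (by rw [finrank_submodule, hW]),
    fun h => h.le⟩

section

open Module Submodule

variable {K : Type*} [Field K] {k : ℕ} {n : Fin k → ℕ} {S T A : Set (MultiProj K n)}
  {s : MultiProj K n} {q : ℙ K (PiTensorProduct K (fun i : Fin k => Fin (n i + 1) → K))}
  {W : Submodule K (PiTensorProduct K (fun i : Fin k => Fin (n i + 1) → K))}

theorem finrank_span_segreVec_le_ncard (hT : T.Finite) :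
    finrank K (span K (segreVec '' T)) ≤ T.ncard :=
  (finrank_span_le_ncard (hT.image _)).trans (Set.ncard_image_le hT)

theorem IsCircuit.finite (hS : IsCircuit S) : S.Finite :=
  Set.finite_of_ncard_pos (Nat.pos_of_ne_zero fun h => by
    have := hS.1; rw [eSet, h] at this; omega)

theorem IsCircuit.finrank_span_of_ssubset (hS : IsCircuit S) (hT : T ⊂ S) :
    finrank K (span K (segreVec '' T)) = T.ncard := by
  have h0 := hS.2 T hT
  have := finrank_span_segreVec_le_ncard (hS.finite.subset hT.subset)
  rw [eSet] at h0
  omega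

theorem IsCircuit.finrank_span (hS : IsCircuit S) :
    finrank K (span K (segreVec '' S)) = S.ncard - 1 := by
  have hpos := hS.1
  rw [eSet] at hpos
  obtain ⟨s, hs⟩ := (Set.nonempty_of_ncard_ne_zero (by omega) : S.Nonempty)
  have : FiniteDimensional K (span K (segreVec '' S)) :=
    FiniteDimensional.span_of_finite K (hS.finite.image _)
  have hdel := hS.finrank_span_of_ssubset (Set.sdiff_singleton_ssubset.mpr hs)
  rw [Set.ncard_sdiff_singleton_of_mem hs] at hdel
  have : finrank K (span K (segreVec '' (S \ {s}))) ≤ finrank K (span K (segreVec '' S)) :=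
    Submodule.finrank_mono (span_mono (Set.image_mono Set.sdiff_subset))
  omega

theorem IsCircuit.segreVec_notMem_span (hS : IsCircuit S) (hs : s ∉ T) (hsT : insert s T ⊂ S) :
    segreVec s ∉ span K (segreVec '' T) := by
  intro hmem
  have hT : T.Finite := hS.finite.subset ((Set.subset_insert s T).trans hsT.subset)
  have hins := hS.finrank_span_of_ssubset hsT
  rw [Set.image_insert_eq, span_insert_eq_span hmem, Set.ncard_insert_of_notMem hs hT] at hins
  have := finrank_span_segreVec_le_ncard hT
  omega

theorem IsCircuit.finrank_span_inf_span_sdiff (hS : IsCircuit S) (hAS : A ⊂ S)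
    (hA : A.Nonempty) :
    finrank K ↥(span K (segreVec '' A) ⊓ span K (segreVec '' (S \ A))) = 1 := by
  have hS' := hS.finite
  have : FiniteDimensional K (span K (segreVec '' A)) :=
    FiniteDimensional.span_of_finite K ((hS'.subset hAS.subset).image _)
  have : FiniteDimensional K (span K (segreVec '' (S \ A))) :=
    FiniteDimensional.span_of_finite K ((hS'.sdiff).image _)
  have hsup := Submodule.finrank_sup_add_finrank_inf_eq (span K (segreVec '' A))
    (span K (segreVec '' (S \ A)))
  rw [← span_union, ← Set.image_union, Set.union_sdiff_cancel hAS.subset, hS.finrank_span,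
    hS.finrank_span_of_ssubset hAS,
    hS.finrank_span_of_ssubset (hAS.subset.sdiff_ssubset_of_nonempty hA),
    Set.ncard_sdiff hAS.subset (hS'.subset hAS.subset)] at hsup
  have := Set.ncard_lt_ncard hAS hS'
  have := Set.ncard_pos (hS'.subset hAS.subset) |>.mpr hA
  omega

theorem IsCircuit.segreVec_notMem_span_sdiff (hS : IsCircuit S) {B : Set (MultiProj K n)}
    (hBS : B ⊆ S) (hs : s ∈ B) (hB : 1 < B.ncard) :
    segreVec s ∉ span K (segreVec '' (S \ B)) := by
  obtain ⟨b, hb, hbs⟩ := Set.exists_ne_of_one_lt_ncard hB s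
  refine hS.segreVec_notMem_span (fun h => h.2 hs) ?_
  refine (Set.ssubset_iff_of_subset (Set.insert_subset (hBS hs) Set.sdiff_subset)).mpr
    ⟨b, hBS hb, ?_⟩
  rintro (h | h)
  exacts [hbs h, h.2 hb]

theorem IsCircuit.segreVec_notMem_span_inf_span_sdiff (hS : IsCircuit S) (hAS : A ⊆ S)
    (hA : 1 < A.ncard) (hSA : 1 < (S \ A).ncard) (hs : s ∈ S) :
    segreVec s ∉ span K (segreVec '' A) ⊓ span K (segreVec '' (S \ A)) := by
  rintro ⟨hsA, hsSA⟩
  by_cases h : s ∈ A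
  · exact hS.segreVec_notMem_span_sdiff hAS h hA hsSA
  · rw [← Set.sdiff_sdiff_cancel_left hAS] at hsA
    exact hS.segreVec_notMem_span_sdiff Set.sdiff_subset ⟨hs, h⟩ hSA hsA

theorem IsSegreOf.segreVec_mem (h : IsSegreOf q s) (hq : q.rep ∈ W) : segreVec s ∈ W := by
  obtain ⟨c, hc⟩ := h
  have hc0 : c ≠ 0 := by
    rintro rfl
    exact q.rep_nonzero (by rw [hc, zero_smul])
  rwa [hc, W.smul_mem_iff hc0] at hq

theorem rep_notMem_span_segreVec_of_ncard_le_one (hq : ¬ InSegre q)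
    (hT : T.Finite) (hT1 : T.ncard ≤ 1) : q.rep ∉ span K (segreVec '' T) := by
  rcases (Set.ncard_le_one_iff_eq hT).mp hT1 with rfl | ⟨y, rfl⟩
  · simpa using q.rep_nonzero
  · rw [Set.image_singleton, mem_span_singleton]
    rintro ⟨c, hc⟩
    exact hq ⟨y, c, hc.symm⟩

theorem xRank_eq_two (hA : A.ncard = 2) (hqA : q.rep ∈ span K (segreVec '' A))
    (hq : ¬ InSegre q) : xRank q = 2 := by
  have h2 : 2 ∈ {m : ℕ | ∃ A : Set (MultiProj K n), A.Finite ∧ A.ncard = m ∧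
      q.rep ∈ span K (segreVec '' A)} :=
    ⟨A, Set.finite_of_ncard_ne_zero (by omega), hA, hqA⟩
  refine le_antisymm (Nat.sInf_le h2) (le_csInf ⟨2, h2⟩ ?_)
  rintro m ⟨T, hT, rfl, hqT⟩
  by_contra! hlt
  exact rep_notMem_span_segreVec_of_ncard_le_one hq hT (by omega) hqT

end

theorem segre_circuit_card_four_intersection_general
    {K : Type*} [Field K] {k : ℕ} {n : Fin k → ℕ}
    (S : Set (MultiProj K n)) (hScard : S.ncard = 4)
    (hcirc : IsCircuit S)
    (A : Set (MultiProj K n)) (hAS : A ⊆ S) (hAcard : A.ncard = 2) :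
    ∃ q : ℙ K (PiTensorProduct K (fun i : Fin k => Fin (n i + 1) → K)),
      ({x : ℙ K (PiTensorProduct K (fun i : Fin k => Fin (n i + 1) → K)) |
          x.rep ∈ Submodule.span K (segreVec '' A)} ∩
        {x : ℙ K (PiTensorProduct K (fun i : Fin k => Fin (n i + 1) → K)) |
          x.rep ∈ Submodule.span K (segreVec '' (S \ A))}) = {q} ∧
      (¬ ∃ s ∈ S, IsSegreOf q s) ∧
      (¬ InSegre q → xRank q = 2) := by
  have hSA : (S \ A).ncard = 2 := by
    rw [Set.ncard_sdiff hAS (hcirc.finite.subset hAS), hScard, hAcard]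
  have hW := hcirc.finrank_span_inf_span_sdiff (hAS.ssubset_of_ne (by rintro rfl; omega))
    (Set.nonempty_of_ncard_ne_zero (by omega))
  have hq := Projectivization.setOf_rep_mem_eq_singleton hW
  have hqW : (Projectivization.mk'' _ hW).rep ∈
      Submodule.span K (segreVec '' A) ⊓ Submodule.span K (segreVec '' (S \ A)) :=
    hq.symm.subset rfl
  refine ⟨_, hq, ?_, fun hns => xRank_eq_two hAcard hqW.1 hns⟩
  rintro ⟨s, hs, hqs⟩
  exact hcirc.segreVec_notMem_span_inf_span_sdiff hAS (by omega) (by omega) hs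
    (hqs.segreVec_mem hqW)

theorem segre_circuit_card_four_intersection
    {K : Type*} [Field K] {k : ℕ} {n : Fin k → ℕ}
    (hk : 0 < k) (hn : ∀ i, 0 < n i)
    (S : Set (MultiProj K n)) (hSfin : S.Finite) (hScard : S.ncard = 4)
    (hcirc : IsCircuit S)
    (A : Set (MultiProj K n)) (hAS : A ⊆ S) (hAcard : A.ncard = 2) :
    ∃ q : ℙ K (PiTensorProduct K (fun i : Fin k => Fin (n i + 1) → K)),
      ({x : ℙ K (PiTensorProduct K (fun i : Fin k => Fin (n i + 1) → K)) |
          x.rep ∈ Submodule.span K (segreVec '' A)} ∩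
        {x : ℙ K (PiTensorProduct K (fun i : Fin k => Fin (n i + 1) → K)) |
          x.rep ∈ Submodule.span K (segreVec '' (S \ A))}) = {q} ∧
      (¬ ∃ s ∈ S, IsSegreOf q s) ∧
      (¬ InSegre q → xRank q = 2) :=
  segre_circuit_card_four_intersection_general S hScard hcirc A hAS hAcard
end

section
/- Let S ⊆ Y = P^{n_1} × ... × P^{n_k} be a nondegenerate finite set with #S = 3 and e(S) > 0 (i.e., ν(S) is contained in a projective line). Then k = 1 and n_1 = 1. -/
open scoped LinearAlgebra.Projectivization
open Projectivization

/-!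
Write `S = {p, q, r}`. Since `e(S) > 0` there is a relation `a ν(p) + b ν(q) + c ν(r) = 0`, and
as Segre images of two distinct points are independent, `a, b, c ≠ 0`. Evaluating the relation
on products of linear forms shows that any two of `p, q, r` differ in at most one factor: if `p`
and `q` differed in factors `i ≠ j`, forms vanishing on one of `pᵢ, qᵢ` and one of `pⱼ, qⱼ` would
force `ab = 0`. So the three points agree outside a single factor `i₀`. Nondegeneracy then rules
out every other factor (there `πⱼ(S)` is a single point), so `k = 1`, and in the factor `i₀` the
relation descends to `a p + b q + c r = 0`, so `P^{n_{i₀}}` is spanned by two points.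
-/

open Module

section LinearAlgebra

variable {K V : Type*} [Field K] [AddCommGroup V] [Module K V]

theorem Module.exists_dual_apply_ne_zero_and_ne_zero {u v : V} (hu : u ≠ 0) (hv : v ≠ 0) :
    ∃ φ : Dual K V, φ u ≠ 0 ∧ φ v ≠ 0 := by
  obtain ⟨φ, hφ⟩ := Projective.exists_dual_ne_zero K hu
  obtain ⟨ψ, hψ⟩ := Projective.exists_dual_ne_zero K hv
  by_cases hφv : φ v = 0
  · by_cases hψu : ψ u = 0
    · exact ⟨φ + ψ, by simp [hψu, hφ], by simp [hφv, hψ]⟩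
    · exact ⟨ψ, hψu, hψ⟩
  · exact ⟨φ, hφ, hφv⟩

theorem Projectivization.exists_dual_rep_eq_zero_and_ne_zero {x y : ℙ K V} (hxy : x ≠ y) :
    ∃ φ : Dual K V, φ x.rep = 0 ∧ φ y.rep ≠ 0 := by
  have hy : y.rep ∉ Submodule.span K {x.rep} := by
    rw [Submodule.mem_span_singleton]
    rintro ⟨a, ha⟩
    have h := (mk_eq_mk_iff' K y.rep x.rep y.rep_nonzero x.rep_nonzero).2 ⟨a, ha⟩
    exact hxy (by simpa using h.symm)
  obtain ⟨φ, hφy, hφx⟩ := Submodule.exists_dual_map_eq_bot_of_notMem hy inferInstance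
  exact ⟨φ, by simpa [Submodule.map_span] using hφx, hφy⟩

theorem finrank_le_two_of_span_triple_eq_top {u v w : V} {a b c : K}
    (hspan : Submodule.span K {u, v, w} = ⊤) (h : a • u + b • v + c • w = 0) (hc : c ≠ 0) :
    finrank K V ≤ 2 := by
  have hw : w ∈ Submodule.span K {u, v} := by
    refine Submodule.mem_span_pair.mpr ⟨-(a / c), -(b / c), smul_right_injective V hc ?_⟩
    simp only [smul_add, smul_smul, mul_neg, mul_div_cancel₀ _ hc]
    linear_combination (norm := module) -h
  have hle : (⊤ : Submodule K V) ≤ Submodule.span K {u, v} := by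
    rw [← hspan, Submodule.span_le]
    exact Set.insert_subset (Submodule.subset_span (by simp))
      (Set.insert_subset (Submodule.subset_span (by simp)) (Set.singleton_subset_iff.mpr hw))
  have : FiniteDimensional K (Submodule.span K {u, v}) :=
    FiniteDimensional.span_of_finite K (Set.toFinite _)
  calc finrank K V = finrank K (⊤ : Submodule K V) := (finrank_top K V).symm
    _ ≤ finrank K (Submodule.span K {u, v}) := Submodule.finrank_mono hle
    _ ≤ 2 := by
      have := finrank_range_le_card (R := K) ![u, v]
      rwa [Matrix.range_cons_cons_empty] at this

end LinearAlgebra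

theorem Finset.prod_update_dual_apply {R ι : Type*} [CommSemiring R] [DecidableEq ι]
    {V : ι → Type*} [∀ i, AddCommMonoid (V i)] [∀ i, Module R (V i)] (χ : ∀ l, Dual R (V l))
    {s : Finset ι} {i : ι} (hi : i ∈ s) (ψ : Dual R (V i)) (v : ∀ l, V l) :
    ∏ l ∈ s, Function.update χ i ψ l (v l) = ψ (v i) * ∏ l ∈ s \ {i}, χ l (v l) := by
  simp_rw [Function.apply_update (fun l (f : Dual R (V l)) => f (v l))]
  exact Finset.prod_update_of_mem hi _ _

theorem eq_off_of_subsingleton_ne {ι : Type*} {α : ι → Type*} {p q r : ∀ i, α i}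
    (hpq : {i | p i ≠ q i}.Subsingleton) (hpr : {i | p i ≠ r i}.Subsingleton)
    (hqr : {i | q i ≠ r i}.Subsingleton) {i : ι} (hi : p i ≠ q i) {j : ι} (hj : j ≠ i) :
    q j = p j ∧ r j = p j := by
  have hqj : q j = p j := by
    by_contra hne
    exact hj (hpq (Ne.symm hne) hi)
  refine ⟨hqj, ?_⟩
  by_contra hne
  have hri : p i = r i := by
    by_contra hpri
    exact hj (hpr (Ne.symm hne) hpri)
  have hqi : q i = r i := by
    by_contra hqri
    exact hj (hqr (show q j ≠ r j by rwa [hqj, ne_comm]) hqri)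
  exact hi (hri.trans hqi.symm)

section Segre

variable {K : Type*} [Field K] {k : ℕ} {n : Fin k → ℕ}

theorem dualDistrib_segreVec (φ : ∀ l, Dual K (Fin (n l + 1) → K)) (x : MultiProj K n) :
    PiTensorProduct.dualDistrib (⨂ₜ[K] l, φ l) (segreVec x) = ∏ l, φ l (x l).rep :=
  PiTensorProduct.dualDistrib_apply φ _

theorem exists_segreVec_relation_of_eSet_pos {p q r : MultiProj K n}
    (h : 0 < eSet ({p, q, r} : Set (MultiProj K n))) :
    ∃ a b c : K, a • segreVec p + b • segreVec q + c • segreVec r = 0 ∧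
      ¬(a = 0 ∧ b = 0 ∧ c = 0) := by
  have hcard : ({p, q, r} : Set (MultiProj K n)).ncard ≤ 3 := by
    have h₁ := Set.ncard_insert_le p {q, r}
    have h₂ := Set.ncard_insert_le q {r}
    rw [Set.ncard_singleton] at h₂
    omega
  have hli : ¬LinearIndependent K ![segreVec p, segreVec q, segreVec r] := by
    intro hli
    have hrank := finrank_span_eq_card hli
    rw [Matrix.range_cons, Matrix.range_cons_cons_empty, Set.singleton_union] at hrank
    rw [eSet, Set.image_insert_eq, Set.image_insert_eq, Set.image_singleton, hrank,
      Fintype.card_fin] at h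
    omega
  obtain ⟨g, hg, i, hi⟩ := Fintype.not_linearIndependent_iff.mp hli
  refine ⟨g 0, g 1, g 2, by simpa [Fin.sum_univ_three] using hg, ?_⟩
  rintro ⟨h₀, h₁, h₂⟩
  fin_cases i <;> simp_all

theorem segreVec_relation_dual_apply {p q r : MultiProj K n} {a b c : K}
    (h : a • segreVec p + b • segreVec q + c • segreVec r = 0)
    (φ : ∀ l, Dual K (Fin (n l + 1) → K)) :
    a * ∏ l, φ l (p l).rep + b * ∏ l, φ l (q l).rep + c * ∏ l, φ l (r l).rep = 0 := by
  simpa [dualDistrib_segreVec] using congrArg (PiTensorProduct.dualDistrib (⨂ₜ[K] l, φ l)) h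

theorem eq_zero_of_smul_segreVec_add_smul_segreVec_eq_zero {p q : MultiProj K n} {a b : K}
    (hpq : p ≠ q) (h : a • segreVec p + b • segreVec q = 0) : a = 0 := by
  obtain ⟨i, hi⟩ := Function.ne_iff.mp hpq
  obtain ⟨ψ, hψq, hψp⟩ := exists_dual_rep_eq_zero_and_ne_zero (Ne.symm hi)
  choose χ hχ using fun l => Projective.exists_dual_ne_zero K (p l).rep_nonzero
  have hrel := segreVec_relation_dual_apply (c := 0) (r := p) (by simpa using h)
    (Function.update χ i ψ)
  simp only [Finset.prod_update_dual_apply _ (Finset.mem_univ i), hψq, zero_mul, mul_zero,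
    add_zero] at hrel
  have hP : ∏ l ∈ Finset.univ \ {i}, χ l (p l).rep ≠ 0 :=
    Finset.prod_ne_zero_iff.mpr fun l _ => hχ l
  simpa [hψp, hP] using hrel

theorem segreVec_relation_left_ne_zero {p q r : MultiProj K n} {a b c : K} (hqr : q ≠ r)
    (h : a • segreVec p + b • segreVec q + c • segreVec r = 0)
    (hne : ¬(a = 0 ∧ b = 0 ∧ c = 0)) : a ≠ 0 := by
  rintro rfl
  have hqr' : b • segreVec q + c • segreVec r = 0 := by simpa using h
  have hb := eq_zero_of_smul_segreVec_add_smul_segreVec_eq_zero hqr hqr'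
  have hc := eq_zero_of_smul_segreVec_add_smul_segreVec_eq_zero hqr.symm
    (by rwa [add_comm] at hqr')
  exact hne ⟨rfl, hb, hc⟩

theorem subsingleton_setOf_ne_of_segreVec_relation {p q r : MultiProj K n} {a b c : K}
    (h : a • segreVec p + b • segreVec q + c • segreVec r = 0) (ha : a ≠ 0) (hb : b ≠ 0) :
    {i | p i ≠ q i}.Subsingleton := by
  intro i hi j hj
  by_contra! hij
  obtain ⟨A₁, hA₁q, hA₁p⟩ := exists_dual_rep_eq_zero_and_ne_zero hi.symm
  obtain ⟨A₂, hA₂p, hA₂q⟩ := exists_dual_rep_eq_zero_and_ne_zero hi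
  obtain ⟨B₁, hB₁q, hB₁p⟩ := exists_dual_rep_eq_zero_and_ne_zero hj.symm
  obtain ⟨B₂, hB₂p, hB₂q⟩ := exists_dual_rep_eq_zero_and_ne_zero hj
  choose χ hχp hχq using fun l =>
    exists_dual_apply_ne_zero_and_ne_zero (K := K) (p l).rep_nonzero (q l).rep_nonzero
  set s := (Finset.univ \ {j}) \ {i}
  have hi_mem : i ∈ Finset.univ \ {j} := by simpa using hij
  have hrel (α : Dual K (Fin (n i + 1) → K)) (β : Dual K (Fin (n j + 1) → K)) :
      a * (β (p j).rep * (α (p i).rep * ∏ l ∈ s, χ l (p l).rep))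
        + b * (β (q j).rep * (α (q i).rep * ∏ l ∈ s, χ l (q l).rep))
        + c * (β (r j).rep * (α (r i).rep * ∏ l ∈ s, χ l (r l).rep)) = 0 := by
    simpa only [Finset.prod_update_dual_apply _ (Finset.mem_univ j),
      Finset.prod_update_dual_apply _ hi_mem, Function.update_of_ne hij.symm]
      using segreVec_relation_dual_apply h (Function.update (Function.update χ i α) j β)
  have h₁₁ := hrel A₁ B₁
  have h₂₂ := hrel A₂ B₂
  have h₁₂ := hrel A₁ B₂
  simp only [hA₁q, hA₂p, hB₁q, hB₂p, zero_mul, mul_zero, add_zero, zero_add] at h₁₁ h₂₂ h₁₂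
  have hPp : ∏ l ∈ s, χ l (p l).rep ≠ 0 := Finset.prod_ne_zero_iff.mpr fun l _ => hχp l
  have hPq : ∏ l ∈ s, χ l (q l).rep ≠ 0 := Finset.prod_ne_zero_iff.mpr fun l _ => hχq l
  -- The `r`-terms `c β(rⱼ) α(rᵢ) Pᵣ` form a rank-one matrix indexed by `α ∈ {A₁, A₂}`,
  -- `β ∈ {B₁, B₂}`, whose `(A₁, B₂)` entry vanishes by `h₁₂`; so the product of its diagonal
  -- entries, which by `h₁₁` and `h₂₂` are minus the `a`- and `b`-terms, vanishes.
  have hab : (a * (B₁ (p j).rep * (A₁ (p i).rep * ∏ l ∈ s, χ l (p l).rep)))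
      * (b * (B₂ (q j).rep * (A₂ (q i).rep * ∏ l ∈ s, χ l (q l).rep))) = 0 := by
    linear_combination (b * (B₂ (q j).rep * (A₂ (q i).rep * ∏ l ∈ s, χ l (q l).rep))) * h₁₁
      - (c * (B₁ (r j).rep * (A₁ (r i).rep * ∏ l ∈ s, χ l (r l).rep))) * h₂₂
      + (c * (B₁ (r j).rep * (A₂ (r i).rep * ∏ l ∈ s, χ l (r l).rep))) * h₁₂
  simp [ha, hb, hA₁p, hA₂q, hB₁p, hB₂q, hPp, hPq] at hab

theorem rep_relation_of_segreVec_relation_of_eq_off {p q r : MultiProj K n} {a b c : K}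
    {i : Fin k} (hq : ∀ j ≠ i, q j = p j) (hr : ∀ j ≠ i, r j = p j)
    (h : a • segreVec p + b • segreVec q + c • segreVec r = 0) :
    a • (p i).rep + b • (q i).rep + c • (r i).rep = 0 := by
  refine (forall_dual_apply_eq_zero_iff K _).mp fun ψ => ?_
  choose χ hχ using fun l => Projective.exists_dual_ne_zero K (p l).rep_nonzero
  have hoff {x : MultiProj K n} (hx : ∀ j ≠ i, x j = p j) :
      ∏ l ∈ Finset.univ \ {i}, χ l (x l).rep = ∏ l ∈ Finset.univ \ {i}, χ l (p l).rep :=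
    Finset.prod_congr rfl fun l hl => by rw [hx l (by simpa using hl)]
  have hrel := segreVec_relation_dual_apply h (Function.update χ i ψ)
  simp only [Finset.prod_update_dual_apply _ (Finset.mem_univ i), hoff hq, hoff hr] at hrel
  have hP : ∏ l ∈ Finset.univ \ {i}, χ l (p l).rep ≠ 0 :=
    Finset.prod_ne_zero_iff.mpr fun l _ => hχ l
  have : ψ (a • (p i).rep + b • (q i).rep + c • (r i).rep)
      * ∏ l ∈ Finset.univ \ {i}, χ l (p l).rep = 0 := by
    simp only [map_add, map_smul, smul_eq_mul]
    linear_combination hrel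
  exact (mul_eq_zero.mp this).resolve_right hP

theorem Nondeg.eq_zero_of_eq_of_eq {p q r : MultiProj K n} (hnd : Nondeg {p, q, r})
    {j : Fin k} (hq : q j = p j) (hr : r j = p j) : n j = 0 := by
  have hspan := hnd j
  simp only [Set.image_insert_eq, Set.image_singleton, hq, hr, Set.insert_eq_of_mem,
    Set.mem_singleton_iff] at hspan
  have := finrank_span_singleton (K := K) (p j).rep_nonzero
  rw [hspan, finrank_top, Module.finrank_fin_fun] at this
  omega

theorem Nondeg.le_one_of_rep_relation {p q r : MultiProj K n} (hnd : Nondeg {p, q, r})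
    {i : Fin k} {a b c : K} (h : a • (p i).rep + b • (q i).rep + c • (r i).rep = 0)
    (hc : c ≠ 0) : n i ≤ 1 := by
  have hspan := hnd i
  simp only [Set.image_insert_eq, Set.image_singleton] at hspan
  have := finrank_le_two_of_span_triple_eq_top hspan h hc
  rw [Module.finrank_fin_fun] at this
  omega

end Segre

theorem segre_dependent_card_three_general
    {K : Type*} [Field K] {k : ℕ} {n : Fin k → ℕ}
    (hn : ∀ i, 0 < n i)
    (S : Set (MultiProj K n)) (hScard : S.ncard = 3)
    (hnd : Nondeg S) (hdep : 0 < eSet S) :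
    k = 1 ∧ ∀ i, n i = 1 := by
  obtain ⟨p, q, r, hpq, hpr, hqr, rfl⟩ := Set.ncard_eq_three.mp hScard
  obtain ⟨a, b, c, hpqr, hne⟩ := exists_segreVec_relation_of_eSet_pos hdep
  have hprq : a • segreVec p + c • segreVec r + b • segreVec q = 0 := by rw [← hpqr]; abel
  have hqrp : b • segreVec q + c • segreVec r + a • segreVec p = 0 := by rw [← hpqr]; abel
  have hrpq : c • segreVec r + a • segreVec p + b • segreVec q = 0 := by rw [← hpqr]; abel
  have ha := segreVec_relation_left_ne_zero hqr hpqr hne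
  have hb := segreVec_relation_left_ne_zero hpr.symm hqrp (by tauto)
  have hc := segreVec_relation_left_ne_zero hpq hrpq (by tauto)
  obtain ⟨i₀, hi₀⟩ := Function.ne_iff.mp hpq
  have hoff (j : Fin k) (hj : j ≠ i₀) : q j = p j ∧ r j = p j :=
    eq_off_of_subsingleton_ne (subsingleton_setOf_ne_of_segreVec_relation hpqr ha hb)
      (subsingleton_setOf_ne_of_segreVec_relation hprq ha hc)
      (subsingleton_setOf_ne_of_segreVec_relation hqrp hb hc) hi₀ hj
  have hall (j : Fin k) : j = i₀ := by
    by_contra hj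
    exact (hn j).ne' (hnd.eq_zero_of_eq_of_eq (hoff j hj).1 (hoff j hj).2)
  have hni₀ : n i₀ = 1 := le_antisymm (hnd.le_one_of_rep_relation
    (rep_relation_of_segreVec_relation_of_eq_off (fun j hj => (hoff j hj).1)
      (fun j hj => (hoff j hj).2) hpqr) hc) (hn i₀)
  have hk : k ≤ 1 := Fin.subsingleton_iff_le_one.mp ⟨fun x y => (hall x).trans (hall y).symm⟩
  exact ⟨by have := i₀.pos; omega, fun i => hall i ▸ hni₀⟩

theorem segre_dependent_card_three
    {K : Type*} [Field K] {k : ℕ} {n : Fin k → ℕ}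
    (hk : 0 < k) (hn : ∀ i, 0 < n i)
    (S : Set (MultiProj K n)) (hSfin : S.Finite) (hScard : S.ncard = 3)
    (hnd : Nondeg S) (hdep : 0 < eSet S) :
    k = 1 ∧ ∀ i, n i = 1 :=
  segre_dependent_card_three_general hn S hScard hnd hdep
end

section
/- Let S ⊆ Y = P^{n_1} × ... × P^{n_k} be a finite set with e(S) > 0. Then S has a unique kernel: there is exactly one subset S' ⊆ S such that e(S') = e(S) and e(S'') < e(S) for every proper subset S'' ⊊ S'. -/
open scoped LinearAlgebra.Projectivization
open Projectivization

/-!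
The defect `e(T) = #T − rank ν(T)` is supermodular, because the rank of a family of vectors is
submodular (Grassmann's formula applied to the spans of `ν(A)` and `ν(B)`). Supermodularity
with `e(∅) = 0` makes `e` monotone, and for two kernels `A`, `B` of `S` it gives
`e(A ∩ B) ≥ e(A) + e(B) − e(A ∪ B) ≥ e(S)`, so minimality forces `A = A ∩ B = B`.
-/

section Supermodular

variable {α : Type*} (e : Set α → ℕ)

def IsKernel (S T : Set α) : Prop :=
  T ⊆ S ∧ e T = e S ∧ ∀ U, U ⊂ T → e U < e S

variable {e}
variable
  (hsuper : ∀ A B : Set α, A.Finite → B.Finite → e A + e B ≤ e (A ∪ B) + e (A ∩ B))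
  (hempty : e ∅ = 0)
include hsuper hempty

theorem monotone_of_supermodular {T U : Set α} (hTU : T ⊆ U) (hU : U.Finite) : e T ≤ e U := by
  have := hsuper T (U \ T) (hU.subset hTU) hU.sdiff
  rw [Set.union_sdiff_cancel hTU, Set.inter_sdiff_self, hempty] at this
  omega

theorem IsKernel.subset_of_supermodular {S A B : Set α} (hS : S.Finite)
    (hA : IsKernel e S A) (hB : IsKernel e S B) : A ⊆ B := by
  obtain ⟨hAS, hAe, hAmin⟩ := hA
  obtain ⟨hBS, hBe, -⟩ := hB
  have hsum := hsuper A B (hS.subset hAS) (hS.subset hBS)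
  have hunion := monotone_of_supermodular hsuper hempty (Set.union_subset hAS hBS) hS
  by_contra hAB
  have hinter := hAmin (A ∩ B)
    (Set.inter_subset_left.ssubset_of_ne fun h ↦ hAB (h ▸ Set.inter_subset_right))
  omega

theorem existsUnique_isKernel_of_supermodular {S : Set α} (hS : S.Finite) :
    ∃! T, IsKernel e S T := by
  obtain ⟨T, ⟨hTS, hTe⟩, hTmin⟩ :=
    (hS.finite_subsets.subset fun T hT ↦ hT.1 : {T | T ⊆ S ∧ e T = e S}.Finite).exists_minimal
      ⟨S, subset_rfl, rfl⟩
  have hT : IsKernel e S T := by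
    refine ⟨hTS, hTe, fun U hUT ↦ ?_⟩
    have hUS : U ⊆ S := hUT.subset.trans hTS
    refine (monotone_of_supermodular hsuper hempty hUS hS).lt_of_ne fun hUe ↦ ?_
    exact hUT.not_subset (hTmin ⟨hUS, hUe⟩ hUT.subset)
  exact ⟨T, hT, fun A hA ↦ (hA.subset_of_supermodular hsuper hempty hS hT).antisymm
    (hT.subset_of_supermodular hsuper hempty hS hA)⟩

end Supermodular

section Rank

variable {K V α : Type*} [Field K] [AddCommGroup V] [Module K V] (f : α → V)

theorem finrank_span_image_le_ncard {T : Set α} (hT : T.Finite) :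
    Module.finrank K (Submodule.span K (f '' T)) ≤ T.ncard := by
  have : Fintype ↥(f '' T) := (hT.image f).fintype
  calc Module.finrank K (Submodule.span K (f '' T)) ≤ (f '' T).toFinset.card :=
        finrank_span_le_card _
    _ = (f '' T).ncard := (Set.ncard_eq_toFinset_card' _).symm
    _ ≤ T.ncard := Set.ncard_image_le hT

theorem finrank_span_image_union_add_inter_le {A B : Set α} (hA : A.Finite) (hB : B.Finite) :
    Module.finrank K (Submodule.span K (f '' (A ∪ B)))
        + Module.finrank K (Submodule.span K (f '' (A ∩ B)))
      ≤ Module.finrank K (Submodule.span K (f '' A))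
        + Module.finrank K (Submodule.span K (f '' B)) := by
  have : FiniteDimensional K (Submodule.span K (f '' A)) :=
    FiniteDimensional.span_of_finite K (hA.image f)
  have : FiniteDimensional K (Submodule.span K (f '' B)) :=
    FiniteDimensional.span_of_finite K (hB.image f)
  have hinter : Submodule.span K (f '' (A ∩ B))
      ≤ Submodule.span K (f '' A) ⊓ Submodule.span K (f '' B) :=
    le_inf (Submodule.span_mono (Set.image_mono Set.inter_subset_left))
      (Submodule.span_mono (Set.image_mono Set.inter_subset_right))
  rw [Set.image_union, Submodule.span_union,
    ← Submodule.finrank_sup_add_finrank_inf_eq (Submodule.span K (f '' A))]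
  exact Nat.add_le_add_left (Submodule.finrank_mono hinter) _

theorem ncard_sub_finrank_span_image_supermodular {A B : Set α} (hA : A.Finite) (hB : B.Finite) :
    (A.ncard - Module.finrank K (Submodule.span K (f '' A)))
        + (B.ncard - Module.finrank K (Submodule.span K (f '' B)))
      ≤ ((A ∪ B).ncard - Module.finrank K (Submodule.span K (f '' (A ∪ B))))
        + ((A ∩ B).ncard - Module.finrank K (Submodule.span K (f '' (A ∩ B)))) := by
  have hcard := Set.ncard_union_add_ncard_inter A B hA hB
  have hrank := finrank_span_image_union_add_inter_le (K := K) f hA hB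
  have := finrank_span_image_le_ncard (K := K) f hA
  have := finrank_span_image_le_ncard (K := K) f hB
  have := finrank_span_image_le_ncard (K := K) f (hA.union hB)
  have := finrank_span_image_le_ncard (K := K) f (hA.inter_of_left B)
  omega

end Rank

theorem kernel_unique_general
    {K : Type*} [Field K] {k : ℕ} {n : Fin k → ℕ}
    (S : Set (MultiProj K n)) (hSfin : S.Finite) :
    ∃! S' : Set (MultiProj K n), S' ⊆ S ∧ eSet S' = eSet S ∧
      ∀ S'' : Set (MultiProj K n), S'' ⊂ S' → eSet S'' < eSet S :=
  existsUnique_isKernel_of_supermodular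
    (fun _ _ ↦ ncard_sub_finrank_span_image_supermodular segreVec)
    (by simp) hSfin

theorem kernel_unique
    {K : Type*} [Field K] {k : ℕ} {n : Fin k → ℕ}
    (hk : 0 < k) (hn : ∀ i, 0 < n i)
    (S : Set (MultiProj K n)) (hSfin : S.Finite) (hdep : 0 < eSet S) :
    ∃! S' : Set (MultiProj K n), S' ⊆ S ∧ eSet S' = eSet S ∧
      ∀ S'' : Set (MultiProj K n), S'' ⊂ S' → eSet S'' < eSet S :=
  kernel_unique_general S hSfin
end

section
/- Let S ⊆ Y = P^{n_1} × ... × P^{n_k} be a finite set with e(S) > 0 and let S' be the kernel of S. Then S' is exactly the set of essential points of S, i.e., S' = { o ∈ S : e(S \ {o}) = e(S) − 1 }. -/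
open scoped LinearAlgebra.Projectivization
open Projectivization

/-!
The statement is pure linear algebra: `e` is the defect `#A - rank f(A)` of a finite family of
vectors `f : α → V`. Removing a point `o` from `A` lowers the defect by one when `f o` lies in
the span of the other vectors, and leaves it unchanged otherwise. Hence every point of the kernel
`S'` lies in the span of `S' \ {o}` (by minimality) and a fortiori of `S \ {o}`, so it is
essential; conversely, a point outside `S'` is not essential, since `S \ {o} ⊇ S'` still has the
full defect by monotonicity.
-/

open Module Submodule

section SpanDefect

variable (K : Type*) {V α : Type*} [Field K] [AddCommGroup V] [Module K V]

noncomputable def spanDefect (f : α → V) (A : Set α) : ℕ :=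
  A.ncard - finrank K (span K (f '' A))

variable {K} {f : α → V}

theorem finrank_span_image_le_ncard_s5 {A : Set α} (hA : A.Finite) :
    finrank K (span K (f '' A)) ≤ A.ncard := by
  have := (hA.image f).fintype
  calc finrank K (span K (f '' A)) ≤ (f '' A).toFinset.card := finrank_span_le_card _
    _ = (f '' A).ncard := (Set.ncard_eq_toFinset_card' _).symm
    _ ≤ A.ncard := Set.ncard_image_le hA

theorem finrank_span_image_le_add_ncard_sdiff {A B : Set α} (hAB : A ⊆ B) (hB : B.Finite) :
    finrank K (span K (f '' B)) ≤ finrank K (span K (f '' A)) + (B \ A).ncard := by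
  have : FiniteDimensional K (span K (f '' A)) :=
    FiniteDimensional.span_of_finite K ((hB.subset hAB).image f)
  have : FiniteDimensional K (span K (f '' (B \ A))) :=
    FiniteDimensional.span_of_finite K ((hB.sdiff (t := A)).image f)
  calc finrank K (span K (f '' B))
      = finrank K ↥(span K (f '' A) ⊔ span K (f '' (B \ A))) := by
        rw [← span_union, ← Set.image_union, Set.union_sdiff_cancel hAB]
    _ ≤ finrank K (span K (f '' A)) + finrank K (span K (f '' (B \ A))) :=
        finrank_add_le_finrank_add_finrank _ _
    _ ≤ finrank K (span K (f '' A)) + (B \ A).ncard :=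
        Nat.add_le_add_left (finrank_span_image_le_ncard_s5 hB.sdiff) _

theorem spanDefect_mono {A B : Set α} (hAB : A ⊆ B) (hB : B.Finite) :
    spanDefect K f A ≤ spanDefect K f B := by
  have hrank := finrank_span_image_le_add_ncard_sdiff (K := K) (f := f) hAB hB
  have hA := finrank_span_image_le_ncard_s5 (K := K) (f := f) (hB.subset hAB)
  have hcard := Set.ncard_sdiff_add_ncard_of_subset hAB hB
  unfold spanDefect
  omega

theorem spanDefect_sdiff_singleton_of_mem_span {A : Set α} {o : α} (ho : o ∈ A)
    (hspan : f o ∈ span K (f '' (A \ {o}))) :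
    spanDefect K f (A \ {o}) = spanDefect K f A - 1 := by
  have hspanA : span K (f '' A) = span K (f '' (A \ {o})) := by
    rw [← span_insert_eq_span hspan, ← Set.image_insert_eq, Set.insert_sdiff_singleton,
      Set.insert_eq_of_mem ho]
  rw [spanDefect, spanDefect, hspanA, Set.ncard_sdiff_singleton_of_mem ho, Nat.sub_right_comm]

theorem spanDefect_sdiff_singleton_of_notMem_span {A : Set α} {o : α} (hA : A.Finite)
    (ho : o ∈ A) (hspan : f o ∉ span K (f '' (A \ {o}))) :
    spanDefect K f (A \ {o}) = spanDefect K f A := by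
  have : FiniteDimensional K (span K (f '' A)) := FiniteDimensional.span_of_finite K (hA.image f)
  have hlt : finrank K (span K (f '' (A \ {o}))) < finrank K (span K (f '' A)) := by
    refine finrank_lt_finrank_of_lt <|
      lt_of_le_of_ne (span_mono (Set.image_mono Set.sdiff_subset)) fun h ↦ ?_
    exact hspan (h ▸ subset_span ⟨o, ho, rfl⟩)
  have hle : finrank K (span K (f '' A)) ≤ finrank K (span K (f '' (A \ {o}))) + 1 := by
    have := finrank_span_image_le_add_ncard_sdiff (K := K) (f := f)
      (Set.sdiff_subset : A \ {o} ⊆ A) hA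
    rwa [Set.sdiff_sdiff_cancel_left (Set.singleton_subset_iff.mpr ho), Set.ncard_singleton] at this
  have hcard := Set.ncard_sdiff_singleton_of_mem ho
  unfold spanDefect
  omega

theorem mem_span_image_sdiff_singleton_of_spanDefect_lt {A : Set α} {o : α} (hA : A.Finite)
    (ho : o ∈ A) (hlt : spanDefect K f (A \ {o}) < spanDefect K f A) :
    f o ∈ span K (f '' (A \ {o})) := by
  by_contra hspan
  exact hlt.ne (spanDefect_sdiff_singleton_of_notMem_span hA ho hspan)

theorem eq_setOf_spanDefect_sdiff_singleton_eq_pred {S S' : Set α} (hS : S.Finite)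
    (hpos : 0 < spanDefect K f S) (hsub : S' ⊆ S) (heq : spanDefect K f S' = spanDefect K f S)
    (hmin : ∀ T, T ⊂ S' → spanDefect K f T < spanDefect K f S) :
    S' = {o ∈ S | spanDefect K f (S \ {o}) = spanDefect K f S - 1} := by
  ext o
  refine ⟨fun ho ↦ ⟨hsub ho, ?_⟩, fun ⟨hoS, hess⟩ ↦ ?_⟩
  · have hspan : f o ∈ span K (f '' (S' \ {o})) :=
      mem_span_image_sdiff_singleton_of_spanDefect_lt (hS.subset hsub) ho
        (heq ▸ hmin _ (Set.sdiff_singleton_ssubset.mpr ho))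
    exact spanDefect_sdiff_singleton_of_mem_span (hsub ho)
      (span_mono (Set.image_mono (Set.sdiff_subset_sdiff_left hsub)) hspan)
  · by_contra ho
    have := spanDefect_mono (K := K) (f := f) (Set.subset_sdiff_singleton hsub ho) hS.sdiff
    omega

end SpanDefect

theorem kernel_eq_essential_points_general
    {K : Type*} [Field K] {k : ℕ} {n : Fin k → ℕ}
    (S : Set (MultiProj K n)) (hSfin : S.Finite) (hdep : 0 < eSet S)
    (S' : Set (MultiProj K n)) (hsub : S' ⊆ S) (heq : eSet S' = eSet S)
    (hker : ∀ S'' : Set (MultiProj K n), S'' ⊂ S' → eSet S'' < eSet S) :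
    S' = {o ∈ S | eSet (S \ {o}) = eSet S - 1} :=
  eq_setOf_spanDefect_sdiff_singleton_eq_pred (f := segreVec) hSfin hdep hsub heq hker

theorem kernel_eq_essential_points
    {K : Type*} [Field K] {k : ℕ} {n : Fin k → ℕ}
    (hk : 0 < k) (hn : ∀ i, 0 < n i)
    (S : Set (MultiProj K n)) (hSfin : S.Finite) (hdep : 0 < eSet S)
    (S' : Set (MultiProj K n)) (hsub : S' ⊆ S) (heq : eSet S' = eSet S)
    (hker : ∀ S'' : Set (MultiProj K n), S'' ⊂ S' → eSet S'' < eSet S) :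
    S' = {o ∈ S | eSet (S \ {o}) = eSet S - 1} :=
  kernel_eq_essential_points_general S hSfin hdep S' hsub heq hker
end

section
/- Fix positive integers k and n_1,...,n_k with k ≥ 2 and n_i ≤ n_1 for all i. Let S ⊆ Y = P^{n_1} × ... × P^{n_k} be a finite nondegenerate set with e(S) > 0. Then #S ≥ e(S) + n_1 + 1. -/
open scoped LinearAlgebra.Projectivization
open Projectivization

/-!
A linear dependence among Segre vectors `⊗ᵢ f a i` is contracted, at every factor `i ≠ i₀`, with
a functional not vanishing on `f a i`, and at the factor `i₀` with an arbitrary functional; this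
turns it into a dependence among the vectors `f b i₀`. So lifting to `S` a basis of
`K^{n i₀ + 1}` extracted from the `i₀`-th projections of `S` gives `n i₀ + 1` independent points
of `ν(S)`, i.e. `dim ⟨ν(S)⟩ ≥ n i₀`, while `#S = e(S) + 1 + dim ⟨ν(S)⟩` once `e(S) > 0`.
-/

open Module Submodule

theorem PiTensorProduct.linearIndependent_tprod {K ι κ : Type*} [Field K] [Fintype ι]
    [DecidableEq ι] {M : ι → Type*} [∀ i, AddCommGroup (M i)] [∀ i, Module K (M i)]
    (f : κ → ∀ i, M i) (i₀ : ι) (hf : ∀ a i, f a i ≠ 0)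
    (hli : LinearIndependent K fun a => f a i₀) :
    LinearIndependent K fun a => tprod K (f a) := by
  rw [linearIndependent_iff']
  intro s c hsum a ha
  choose φ hφ using fun i => Projective.exists_dual_ne_zero K (hf a i)
  set d : κ → K := fun b => ∏ i ∈ Finset.univ.erase i₀, φ i (f b i)
  have hd : d a ≠ 0 := Finset.prod_ne_zero_iff.2 fun i _ => hφ i
  have hcontract (ψ : Dual K (M i₀)) (b : κ) :
      lift ((MultilinearMap.mkPiAlgebra K ι K).compLinearMap (Function.update φ i₀ ψ))
        (tprod K (f b)) = ψ (f b i₀) * d b := by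
    rw [lift.tprod, MultilinearMap.compLinearMap_apply, MultilinearMap.mkPiAlgebra_apply,
      ← Finset.mul_prod_erase _ _ (Finset.mem_univ i₀), Function.update_self]
    refine congrArg _ (Finset.prod_congr rfl fun i hi => ?_)
    rw [Function.update_of_ne (Finset.ne_of_mem_erase hi)]
  have hcomb : ∑ b ∈ s, (c b * d b) • f b i₀ = 0 := by
    rw [← forall_dual_apply_eq_zero_iff K]
    intro ψ
    have := congrArg (lift ((MultilinearMap.mkPiAlgebra K ι K).compLinearMap
      (Function.update φ i₀ ψ))) hsum
    simp only [map_sum, map_smul, hcontract, smul_eq_mul, map_zero] at this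
    simp only [map_sum, map_smul, smul_eq_mul, ← this]
    exact Finset.sum_congr rfl fun b _ => by ring
  exact (mul_eq_zero.1 (linearIndependent_iff'.1 hli s _ hcomb a ha)).resolve_right hd

theorem finrank_span_rep_image_le_finrank_span_segreVec {K : Type*} [Field K] {k : ℕ}
    {n : Fin k → ℕ} (S : Set (MultiProj K n)) (i₀ : Fin k) :
    finrank K (span K ((fun x => (x i₀).rep) '' S)) ≤ finrank K (span K (segreVec '' S)) := by
  obtain ⟨κ, a, -, hspan, hli⟩ :=
    exists_linearIndependent' K fun x : S => ((x : MultiProj K n) i₀).rep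
  have hseg : LinearIndependent K fun b => segreVec (a b : MultiProj K n) :=
    PiTensorProduct.linearIndependent_tprod _ i₀ (fun _ _ => rep_nonzero _) hli
  have : Fintype κ := @Fintype.ofFinite _ hli.finite
  calc finrank K (span K ((fun x => (x i₀).rep) '' S))
      = finrank K (span K (Set.range ((fun x : S => ((x : MultiProj K n) i₀).rep) ∘ a))) := by
        rw [Set.image_eq_range, hspan]
    _ = finrank K (span K (Set.range fun b => segreVec (a b : MultiProj K n))) := by
        rw [finrank_span_eq_card hli, finrank_span_eq_card hseg]
    _ ≤ finrank K (span K (segreVec '' S)) :=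
        finrank_mono (span_mono (Set.range_subset_iff.2 fun b => Set.mem_image_of_mem _ (a b).2))

theorem nondeg_dependent_card_ge_general
    {K : Type*} [Field K] {k : ℕ} {n : Fin k → ℕ}
    (i0 : Fin k)
    (S : Set (MultiProj K n))
    (hnd : Nondeg S) (hdep : 0 < eSet S) :
    eSet S + n i0 + 1 ≤ S.ncard := by
  have hrank := finrank_span_rep_image_le_finrank_span_segreVec S i0
  rw [hnd i0, finrank_top, finrank_fin_fun] at hrank
  unfold eSet at hdep ⊢
  omega

theorem nondeg_dependent_card_ge
    {K : Type*} [Field K] {k : ℕ} {n : Fin k → ℕ}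
    (hk2 : 2 ≤ k) (hn : ∀ i, 0 < n i)
    (i0 : Fin k) (hmax : ∀ i, n i ≤ n i0)
    (S : Set (MultiProj K n)) (hSfin : S.Finite)
    (hnd : Nondeg S) (hdep : 0 < eSet S) :
    eSet S + n i0 + 1 ≤ S.ncard :=
  nondeg_dependent_card_ge_general i0 S hnd hdep
end

section
/- Let K be an infinite field. Fix positive integers k ≥ 2, n_1,...,n_k and e ≥ 1, and set m := max{n_1,...,n_k}. Then there exists a minimal and nondegenerate finite set S ⊆ Y = P^{n_1} × ... × P^{n_k} with e(S) = e and #S = m + k + e. -/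
open scoped LinearAlgebra.Projectivization
open Projectivization

/-! Points `([e₀ + t e₁], …, [e₀ + t e₁])` have Segre images `∑_d t ^ d • W_d`, where `W_d` is
the sum of the pure tensors with `d` factors `e₁` and the others `e₀`: they lie on a rational
normal curve of degree `k`, so `k + 1 + e` of them span only `k + 1` dimensions. For
`2 ≤ s ≤ m` add a point that is `[e_s]` in every factor where `e_s` exists and a fresh
`[e₀ + t e₁]` elsewhere; each adds one dimension, as the coefficients of suitable basis tensors
show (a block matrix with a Vandermonde block). Any two of these `m + k + e` points differ in
every factor, while a line in the Segre variety moves a single factor, so the set is minimal;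
`e₀`, `e₁` and the `e_s` span every factor, so it is nondegenerate. -/

open PiTensorProduct Module

theorem Projectivization.exists_dual_rep_ne_zero {K V : Type*} [Field K] [AddCommGroup V]
    [Module K V] (D D' : ℙ K V) :
    ∃ f : Dual K V, f D.rep ≠ 0 ∧ (D ≠ D' → f D'.rep = 0) := by
  by_cases h : D = D'
  · obtain ⟨f, hf, -⟩ := Submodule.exists_dual_map_eq_bot_of_notMem
      (p := (⊥ : Submodule K V)) (by simpa using D.rep_nonzero) inferInstance
    exact ⟨f, hf, fun h' => absurd h h'⟩
  · have hD : D.rep ∉ K ∙ D'.rep := by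
      rw [Submodule.mem_span_singleton]
      rintro ⟨a, ha⟩
      exact (LinearIndependent.pair_iff' D'.rep_nonzero).1
        (LinearIndependent.pair_symm_iff.1 (linearIndependent_pair_iff_ne.2 h)) a ha
    obtain ⟨f, hf, hf'⟩ := Submodule.exists_dual_map_eq_bot_of_notMem hD inferInstance
    refine ⟨f, hf, fun _ => ?_⟩
    rw [Submodule.map_span, Set.image_singleton, Submodule.span_singleton_eq_bot] at hf'
    exact hf'

theorem Projectivization.span_range_rep_mk {K V ι : Type*} [Field K] [AddCommGroup V]
    [Module K V] (f : ι → V) (hf : ∀ x, f x ≠ 0) :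
    Submodule.span K (Set.range fun x => (mk K (f x) (hf x)).rep) =
      Submodule.span K (Set.range f) := by
  simp only [Submodule.span_range_eq_iSup, ← submodule_eq, submodule_mk]

theorem linearIndependent_of_det_ne_zero {R ι V : Type*} [CommRing R] [IsDomain R] [Fintype ι]
    [DecidableEq ι] [AddCommGroup V] [Module R V] (φ : ι → Dual R V) (v : ι → V)
    (h : (Matrix.of fun r c => φ r (v c)).det ≠ 0) : LinearIndependent R v :=
  LinearIndependent.of_comp (LinearMap.pi φ) (Matrix.linearIndependent_cols_of_det_ne_zero h)

section PureTensor

variable {K ι : Type*} [Field K] [Fintype ι] {V : ι → Type*} [∀ i, AddCommGroup (V i)]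
  [∀ i, Module K (V i)]

theorem Finset.prod_mul_prod_eq_prod_piecewise_mul_prod_piecewise [DecidableEq ι] {M : Type*}
    [CommMonoid M] (f g : ι → M) (s : Finset ι) :
    (∏ i, f i) * ∏ i, g i = (∏ i, s.piecewise f g i) * ∏ i, s.piecewise g f i := by
  rw [← Finset.prod_mul_distrib, ← Finset.prod_mul_distrib]
  refine Finset.prod_congr rfl fun i _ => ?_
  by_cases hi : i ∈ s <;> simp [hi, mul_comm]

/-- A `2 × 2` minor of product functionals vanishes on pure tensors but not on this sum;
`c = 0` shows that the sum is nonzero. -/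
theorem tprod_rep_add_tprod_rep_ne_smul_tprod {p q : ∀ i, ℙ K (V i)} {i₀ i₁ : ι}
    (h01 : i₀ ≠ i₁) (h₀ : p i₀ ≠ q i₀) (h₁ : p i₁ ≠ q i₁) (c : K) (w : ∀ i, V i) :
    tprod K (fun i => (p i).rep) + tprod K (fun i => (q i).rep) ≠ c • tprod K w := by
  classical
  choose φ hφ hφ' using fun i => (p i).exists_dual_rep_ne_zero (q i)
  choose ψ hψ hψ' using fun i => (q i).exists_dual_rep_ne_zero (p i)
  set ev : (∀ i, Dual K (V i)) → (PiTensorProduct K V) →ₗ[K] K := fun χ => dualDistrib (tprod K χ)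
  have ev_tprod : ∀ χ (u : ∀ i, V i), ev χ (tprod K u) = ∏ i, χ i (u i) := fun χ u =>
    dualDistrib_apply χ u
  have hzero : ∀ χ : ∀ i, Dual K (V i), ∀ (u : ∀ i, V i) i, χ i (u i) = 0 →
      ev χ (tprod K u) = 0 := fun χ u i hi => by
    rw [ev_tprod]; exact Finset.prod_eq_zero (Finset.mem_univ i) hi
  have hφ₀ := hφ' i₀ h₀
  have hψ₁ := hψ' i₁ h₁.symm
  intro hz
  have hminor := Finset.prod_mul_prod_eq_prod_piecewise_mul_prod_piecewise
    (fun i => φ i (w i)) (fun i => ψ i (w i)) {i₀}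
  have hP : ev φ (tprod K fun i => (p i).rep) ≠ 0 := by
    rw [ev_tprod]; exact Finset.prod_ne_zero_iff.2 fun i _ => hφ i
  have hQ : ev ψ (tprod K fun i => (q i).rep) ≠ 0 := by
    rw [ev_tprod]; exact Finset.prod_ne_zero_iff.2 fun i _ => hψ i
  have hmixed : ev (({i₀} : Finset ι).piecewise φ ψ) (c • tprod K w) = 0 := by
    rw [← hz, map_add, hzero _ (fun i => (p i).rep) i₁ (by simpa [h01.symm] using hψ₁),
      hzero _ (fun i => (q i).rep) i₀ (by simpa using hφ₀), add_zero]
  have hφz : ev φ (c • tprod K w) = ev φ (tprod K fun i => (p i).rep) := by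
    rw [← hz, map_add, hzero _ (fun i => (q i).rep) i₀ hφ₀, add_zero]
  have hψz : ev ψ (c • tprod K w) = ev ψ (tprod K fun i => (q i).rep) := by
    rw [← hz, map_add, hzero _ (fun i => (p i).rep) i₁ hψ₁, zero_add]
  apply mul_ne_zero hP hQ
  rw [← hφz, ← hψz]
  have hpw : ∀ i, (({i₀} : Finset ι).piecewise φ ψ i) (w i) =
      ({i₀} : Finset ι).piecewise (fun i => φ i (w i)) (fun i => ψ i (w i)) i := fun i => by
    by_cases h : i = i₀ <;> simp [h]
  simp only [map_smul, ev_tprod, smul_eq_mul, hpw] at hmixed ⊢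
  linear_combination c ^ 2 * hminor +
    (c * ∏ i, ({i₀} : Finset ι).piecewise (fun i => ψ i (w i)) (fun i => φ i (w i)) i) * hmixed

end PureTensor

section Segre

variable {K : Type*} [Field K] {k : ℕ} {n : Fin k → ℕ}

theorem IsSegreOf.eq_mk {x : ℙ K (PiTensorProduct K (fun i : Fin k => Fin (n i + 1) → K))}
    {s : MultiProj K n} (h : IsSegreOf x s) : ∃ hs : segreVec s ≠ 0, x = mk K (segreVec s) hs := by
  obtain ⟨c, hc⟩ := h
  have hs : segreVec s ≠ 0 := fun h0 => x.rep_nonzero (by rw [hc, h0, smul_zero])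
  exact ⟨hs, by rw [← x.mk_rep, mk_eq_mk_iff']; exact ⟨c, hc.symm⟩⟩

theorem IsSegreOf.segreVec_mem_s10 {x : ℙ K (PiTensorProduct K (fun i : Fin k => Fin (n i + 1) → K))}
    {s : MultiProj K n} (h : IsSegreOf x s) {W : Submodule K _} (hx : x.rep ∈ W) :
    segreVec s ∈ W := by
  obtain ⟨c, hc⟩ := h
  have hc0 : c ≠ 0 := fun h0 => x.rep_nonzero (by rw [hc, h0, zero_smul])
  rw [← inv_smul_smul₀ hc0 (segreVec s), ← hc]
  exact W.smul_mem _ hx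

-- Otherwise the sum of the two Segre vectors would be a pure tensor on the line.
theorem isMinimal_of_forall_ne {S : Set (MultiProj K n)}
    (hS : ∀ p ∈ S, ∀ q ∈ S, p ≠ q → ∃ i j, i ≠ j ∧ p i ≠ q i ∧ p j ≠ q j) : IsMinimal S := by
  rintro ⟨W, -, hW, x₁, x₂, hx, hx₁, hx₂, ⟨s₁, hs₁, h₁⟩, ⟨s₂, hs₂, h₂⟩⟩
  have hs : s₁ ≠ s₂ := by
    rintro rfl
    obtain ⟨_, e₁⟩ := h₁.eq_mk
    obtain ⟨_, e₂⟩ := h₂.eq_mk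
    exact hx (e₁.trans e₂.symm)
  obtain ⟨i, j, hij, hi, hj⟩ := hS s₁ hs₁ s₂ hs₂ hs
  have hnot : ∀ (c : K) (y : MultiProj K n), segreVec s₁ + segreVec s₂ ≠ c • segreVec y :=
    fun c y => tprod_rep_add_tprod_rep_ne_smul_tprod hij hi hj c (fun l => (y l).rep)
  set z := segreVec s₁ + segreVec s₂
  have hz : z ≠ 0 := by simpa using hnot 0 s₁
  obtain ⟨a, ha⟩ := exists_smul_eq_mk_rep K z hz
  obtain ⟨y, c, hc⟩ := hW (mk K z hz) (by
    rw [← ha]; exact W.smul_mem _ (W.add_mem (h₁.segreVec_mem_s10 hx₁) (h₂.segreVec_mem_s10 hx₂)))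
  refine hnot ((a⁻¹ : Kˣ) * c) y ?_
  rw [mul_smul, ← hc, ← ha, Units.smul_def, smul_smul, Units.inv_mul, one_smul]

theorem span_range_segreVec_mk {ι : Type*} (u : ι → ∀ i, Fin (n i + 1) → K)
    (hu : ∀ x i, u x i ≠ 0) :
    Submodule.span K
        (Set.range fun x => segreVec (K := K) (n := n) fun i => mk K (u x i) (hu x i)) =
      Submodule.span K (Set.range fun x => tprod K (u x)) := by
  simp only [Submodule.span_range_eq_iSup]
  refine iSup_congr fun x => ?_
  choose a ha using fun i => exists_smul_eq_mk_rep K (u x i) (hu x i)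
  have hrep : (fun i => (mk K (u x i) (hu x i)).rep) = fun i => (a i : K) • u x i :=
    funext fun i => (ha i).symm
  rw [segreVec, hrep, MultilinearMap.map_smul_univ, ← Units.coe_prod, ← Units.smul_def,
    Submodule.span_singleton_group_smul_eq]

end Segre

section Witness

variable {K : Type*} [Field K]

def stdVec (d s : ℕ) : Fin (d + 1) → K := fun w => if (w : ℕ) = s then 1 else 0

def lineVec (d : ℕ) (t : K) : Fin (d + 1) → K := stdVec d 0 + t • stdVec d 1

theorem stdVec_ne_zero {d s : ℕ} (hs : s ≤ d) : stdVec (K := K) d s ≠ 0 := fun h => by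
  simpa [stdVec] using congrFun h ⟨s, by omega⟩

theorem lineVec_ne_zero (d : ℕ) (t : K) : lineVec d t ≠ 0 := fun h => by
  simpa [lineVec, stdVec] using congrFun h 0

theorem mk_ne_mk_of_mul_ne {ι : Type*} {u v : ι → K} (hu : u ≠ 0) (hv : v ≠ 0) (w₁ w₂ : ι)
    (h : u w₁ * v w₂ ≠ u w₂ * v w₁) : mk K u hu ≠ mk K v hv := by
  rw [Ne, mk_eq_mk_iff']
  rintro ⟨a, rfl⟩
  exact h (by simp only [Pi.smul_apply, smul_eq_mul]; ring)

theorem mk_lineVec_ne_mk_lineVec {d : ℕ} (hd : 0 < d) {t t' : K} (h : t ≠ t') (hu hv) :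
    mk K (lineVec d t) hu ≠ mk K (lineVec d t') hv :=
  mk_ne_mk_of_mul_ne hu hv 0 ⟨1, by omega⟩ (by simpa [lineVec, stdVec] using h.symm)

theorem mk_stdVec_ne_mk_lineVec {d s : ℕ} (h2 : 2 ≤ s) (hs : s ≤ d) (t : K) (hu hv) :
    mk K (stdVec d s) hu ≠ mk K (lineVec d t) hv :=
  have h0 : s ≠ 0 := by omega
  have h1 : s ≠ 1 := by omega
  mk_ne_mk_of_mul_ne hu hv ⟨s, by omega⟩ 0 (by simp [lineVec, stdVec, h0, h1, h0.symm])

theorem mk_stdVec_ne_mk_stdVec {d s s' : ℕ} (hs : s ≤ d) (hs' : s' ≤ d) (h : s ≠ s') (hu hv) :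
    mk K (stdVec d s) hu ≠ mk K (stdVec (K := K) d s') hv :=
  mk_ne_mk_of_mul_ne hu hv ⟨s, by omega⟩ ⟨s', by omega⟩ (by simp [stdVec, h, Ne.symm h])

theorem stdVec_mem_of_lineVec_mem {d : ℕ} {t t' : K} (h : t ≠ t')
    {P : Submodule K (Fin (d + 1) → K)}
    (ht : lineVec d t ∈ P) (ht' : lineVec d t' ∈ P) : stdVec d 0 ∈ P ∧ stdVec d 1 ∈ P := by
  have h1 : stdVec d 1 = (t - t')⁻¹ • (lineVec d t - lineVec d t') := by
    rw [lineVec, lineVec, add_sub_add_left_eq_sub, ← sub_smul, inv_smul_smul₀ (sub_ne_zero.2 h)]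
  have h0 : stdVec d 0 = lineVec d t - t • stdVec d 1 := by
    rw [lineVec, add_sub_cancel_right]
  have h1P : stdVec d 1 ∈ P := h1 ▸ P.smul_mem _ (P.sub_mem ht ht')
  exact ⟨h0 ▸ P.sub_mem ht (P.smul_mem _ h1P), h1P⟩

def coordFun (d s : ℕ) : Dual K (Fin (d + 1) → K) :=
  if h : s ≤ d then LinearMap.proj ⟨s, by omega⟩ else 0

theorem coordFun_stdVec {d s s' : ℕ} (hs : s ≤ d) :
    coordFun d s (stdVec (K := K) d s') = if s = s' then 1 else 0 := by
  simp [coordFun, hs, stdVec]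

theorem coordFun_lineVec {d s : ℕ} (hs : s ≤ d) (t : K) :
    coordFun d s (lineVec d t) = if s = 0 then 1 else if s = 1 then t else 0 := by
  rw [coordFun, dif_pos hs]
  by_cases h0 : s = 0 <;> by_cases h1 : s = 1 <;> simp [lineVec, stdVec, h0, h1]

variable {k : ℕ} {n : Fin k → ℕ} {N L : ℕ}

variable (n) in
def witnessVec (t : Fin N ⊕ Fin L → K) : Fin N ⊕ Fin L → ∀ i, Fin (n i + 1) → K
  | Sum.inl a, i => lineVec (n i) (t (Sum.inl a))
  | Sum.inr j, i =>
    if (j : ℕ) + 2 ≤ n i then stdVec (n i) (j + 2) else lineVec (n i) (t (Sum.inr j))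

variable (n) in
theorem witnessVec_ne_zero (t : Fin N ⊕ Fin L → K) (x : Fin N ⊕ Fin L) (i : Fin k) :
    witnessVec n t x i ≠ 0 := by
  rcases x with a | j
  · exact lineVec_ne_zero _ _
  · by_cases h : (j : ℕ) + 2 ≤ n i
    · simpa [witnessVec, h] using stdVec_ne_zero h
    · simpa [witnessVec, h] using lineVec_ne_zero _ _

variable (n) in
noncomputable def witnessPt (t : Fin N ⊕ Fin L → K) (x : Fin N ⊕ Fin L) : MultiProj K n :=
  fun i => mk K (witnessVec n t x i) (witnessVec_ne_zero n t x i)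

theorem witnessPt_apply_ne {t : Fin N ⊕ Fin L → K} (ht : Function.Injective t)
    (hn : ∀ i, 0 < n i) {x y : Fin N ⊕ Fin L} (hxy : x ≠ y) (i : Fin k) :
    witnessPt n t x i ≠ witnessPt n t y i := by
  have hline := fun h h' => mk_lineVec_ne_mk_lineVec (hn i) (ht.ne hxy) h h'
  unfold witnessPt
  rcases x with a | j <;> rcases y with b | j'
  · exact hline _ _
  · by_cases h' : (j' : ℕ) + 2 ≤ n i
    · simpa [witnessVec, h'] using (mk_stdVec_ne_mk_lineVec (by omega) h' _ _ _).symm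
    · simpa [witnessVec, h'] using hline _ _
  · by_cases h : (j : ℕ) + 2 ≤ n i
    · simpa [witnessVec, h] using mk_stdVec_ne_mk_lineVec (by omega) h _ _ _
    · simpa [witnessVec, h] using hline _ _
  · have hjj : (j : ℕ) + 2 ≠ j' + 2 := by simpa [Fin.val_inj] using hxy
    by_cases h : (j : ℕ) + 2 ≤ n i <;> by_cases h' : (j' : ℕ) + 2 ≤ n i
    · simpa [witnessVec, h, h'] using mk_stdVec_ne_mk_stdVec h h' hjj _ _
    · simpa [witnessVec, h, h'] using mk_stdVec_ne_mk_lineVec (by omega) h _ _ _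
    · simpa [witnessVec, h, h'] using (mk_stdVec_ne_mk_lineVec (by omega) h' _ _ _).symm
    · simpa [witnessVec, h, h'] using hline _ _

theorem witnessPt_injective {t : Fin N ⊕ Fin L → K} (ht : Function.Injective t)
    (hn : ∀ i, 0 < n i) (i : Fin k) : Function.Injective (witnessPt n t) := fun x y h => by
  by_contra hxy
  exact witnessPt_apply_ne ht hn hxy i (congrFun h i)

theorem ncard_range_witnessPt {t : Fin N ⊕ Fin L → K} (ht : Function.Injective t)
    (hn : ∀ i, 0 < n i) (i : Fin k) : (Set.range (witnessPt n t)).ncard = N + L := by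
  rw [Set.ncard_range_of_injective (witnessPt_injective ht hn i), Nat.card_eq_fintype_card,
    Fintype.card_sum, Fintype.card_fin, Fintype.card_fin]

theorem isMinimal_range_witnessPt (hk : 2 ≤ k) {t : Fin N ⊕ Fin L → K}
    (ht : Function.Injective t) (hn : ∀ i, 0 < n i) : IsMinimal (Set.range (witnessPt n t)) := by
  refine isMinimal_of_forall_ne ?_
  rintro _ ⟨x, rfl⟩ _ ⟨y, rfl⟩ hxy
  have hxy' : x ≠ y := fun h => hxy (h ▸ rfl)
  exact ⟨⟨0, by omega⟩, ⟨1, by omega⟩, by simp [Fin.ext_iff],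
    witnessPt_apply_ne ht hn hxy' _, witnessPt_apply_ne ht hn hxy' _⟩

theorem span_range_witnessVec_eq_top {t : Fin N ⊕ Fin L → K} (ht : Function.Injective t)
    (hN : 2 ≤ N) {i : Fin k} (hL : n i ≤ L + 1) :
    Submodule.span K (Set.range fun x => witnessVec n t x i) = ⊤ := by
  set P := Submodule.span K (Set.range fun x => witnessVec n t x i)
  have hmem : ∀ x, witnessVec n t x i ∈ P := fun x => Submodule.subset_span ⟨x, rfl⟩
  obtain ⟨h0, h1⟩ := stdVec_mem_of_lineVec_mem
    (ht.ne (Sum.inl_injective.ne (Fin.ne_of_val_ne zero_ne_one)))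
    (hmem (Sum.inl ⟨0, by omega⟩)) (hmem (Sum.inl ⟨1, by omega⟩))
  rw [eq_top_iff, ← (Pi.basisFun K (Fin (n i + 1))).span_eq, Submodule.span_le]
  rintro _ ⟨w, rfl⟩
  have hw : Pi.basisFun K (Fin (n i + 1)) w = stdVec (n i) w := by
    ext v; simp [stdVec, Pi.single_apply, Fin.ext_iff, eq_comm]
  rw [SetLike.mem_coe, hw]
  obtain hw2 | hw2 := lt_or_ge (w : ℕ) 2
  · interval_cases h : (w : ℕ)
    · exact h0
    · exact h1
  · have hj : (w : ℕ) - 2 < L := by have := w.isLt; omega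
    have hstd := hmem (Sum.inr ⟨w - 2, hj⟩)
    rwa [witnessVec, if_pos (by have := w.isLt; simp only; omega), Nat.sub_add_cancel hw2] at hstd

theorem nondeg_range_witnessPt {t : Fin N ⊕ Fin L → K} (ht : Function.Injective t) (hN : 2 ≤ N)
    (hL : ∀ i, n i ≤ L + 1) : Nondeg (Set.range (witnessPt n t)) := fun i => by
  rw [← Set.range_comp]
  exact (span_range_rep_mk _ _).trans (span_range_witnessVec_eq_top ht hN (hL i))

variable (n) in
noncomputable def stdTensor (s : Finset (Fin k)) : PiTensorProduct K (fun i => Fin (n i + 1) → K) :=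
  tprod K (s.piecewise (fun i => stdVec (n i) 1) (fun i => stdVec (n i) 0))

variable (n) in
noncomputable def symTensor (d : ℕ) : PiTensorProduct K (fun i => Fin (n i + 1) → K) :=
  ∑ s : Finset (Fin k) with s.card = d, stdTensor n s

theorem tprod_lineVec_eq_sum (t : K) :
    tprod K (fun i => lineVec (n i) t) = ∑ s : Finset (Fin k), t ^ s.card • stdTensor n s := by
  classical
  have hsplit : (fun i => lineVec (n i) t) =
      (fun i => t • stdVec (n i) 1) + fun i => stdVec (K := K) (n i) 0 := by
    ext i : 1; exact add_comm _ _
  rw [hsplit, MultilinearMap.map_add_univ]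
  refine Finset.sum_congr rfl fun s _ => ?_
  have hpw : s.piecewise (fun i => t • stdVec (n i) 1) (fun i => stdVec (K := K) (n i) 0) =
      s.piecewise (fun i => t • s.piecewise (fun i => stdVec (n i) 1) (fun i => stdVec (n i) 0) i)
        (s.piecewise (fun i => stdVec (n i) 1) (fun i => stdVec (n i) 0)) := by
    ext i : 1; by_cases hi : i ∈ s <;> simp [hi]
  rw [hpw, MultilinearMap.map_piecewise_smul, Finset.prod_const, stdTensor]

theorem tprod_lineVec_mem_span_symTensor (t : K) :
    tprod K (fun i => lineVec (n i) t) ∈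
      Submodule.span K (Set.range fun d : Fin (k + 1) => symTensor n d) := by
  rw [tprod_lineVec_eq_sum, ← Finset.sum_fiberwise_of_maps_to (t := Finset.range (k + 1))
    (g := Finset.card) fun s _ => Finset.mem_range.2 (Nat.lt_succ_of_le (card_finset_fin_le s))]
  refine Submodule.sum_mem _ fun d hd => ?_
  rw [Finset.sum_congr rfl fun s hs => by rw [(Finset.mem_filter.1 hs).2], ← Finset.smul_sum]
  exact Submodule.smul_mem _ _ (Submodule.subset_span ⟨⟨d, Finset.mem_range.1 hd⟩, rfl⟩)

theorem finrank_span_tprod_witnessVec_le (t : Fin N ⊕ Fin L → K) :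
    finrank K (Submodule.span K (Set.range fun x => tprod K (witnessVec n t x))) ≤ k + 1 + L := by
  classical
  set gen := Sum.elim (fun d : Fin (k + 1) => symTensor n d)
    (fun j : Fin L => tprod K (witnessVec n t (Sum.inr j)))
  have hle : Submodule.span K (Set.range fun x => tprod K (witnessVec n t x)) ≤
      Submodule.span K (Set.range gen) := by
    rw [Submodule.span_le]
    rintro _ ⟨a | j, rfl⟩
    · exact Submodule.span_mono (Set.range_comp_subset_range Sum.inl gen)
        (tprod_lineVec_mem_span_symTensor _)
    · exact Submodule.subset_span ⟨Sum.inr j, rfl⟩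
  calc _ ≤ finrank K (Submodule.span K (Set.range gen)) := Submodule.finrank_mono hle
    _ ≤ Fintype.card (Fin (k + 1) ⊕ Fin L) := finrank_range_le_card gen
    _ = k + 1 + L := by simp

variable (n) in
-- Row `Sum.inl b` takes `e₁` in the first `b` factors and `e₀` in the others, so it evaluates
-- to `t ^ b` on `[e₀ + t e₁]`-points: together they form a Vandermonde block.
def witnessRowSlot : Fin (k + 1) ⊕ Fin L → Fin k → ℕ
  | Sum.inl b, i => if (i : ℕ) < b then 1 else 0
  | Sum.inr j, i => if (j : ℕ) + 2 ≤ n i then j + 2 else 0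

theorem witnessMatrix_eq_fromBlocks (t : Fin N ⊕ Fin L → K) (hn : ∀ i, 0 < n i)
    (hN : k + 1 ≤ N) {i₀ : Fin k} (hL : L + 1 ≤ n i₀) :
    Matrix.of (fun r c => ∏ i, coordFun (n i) (witnessRowSlot n r i)
        (witnessVec n t (Sum.map (Fin.castLE hN) id c) i)) =
      Matrix.fromBlocks (Matrix.vandermonde fun a => t (Sum.inl (Fin.castLE hN a))).transpose 0 0
        (1 : Matrix (Fin L) (Fin L) K) := by
  classical
  have hstd : ∀ j : Fin L, witnessVec n t (Sum.inr j) i₀ = stdVec (n i₀) (j + 2) := fun j => by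
    simp [witnessVec, show (j : ℕ) + 2 ≤ n i₀ by omega]
  ext (b | j) (a | j')
  · simp only [Matrix.of_apply, Sum.map_inl, witnessVec, witnessRowSlot, Matrix.fromBlocks_apply₁₁,
      Matrix.transpose_apply, Matrix.vandermonde_apply]
    rw [Finset.prod_congr rfl fun i _ => by
      rw [apply_ite (coordFun (K := K) (n i)), apply_ite (fun f : Dual K _ => f _),
        coordFun_lineVec (hn i), coordFun_lineVec (Nat.zero_le _)],
      Finset.prod_ite]
    simp [Fin.card_filter_val_lt, Nat.le_of_lt_succ b.isLt]
  · refine Finset.prod_eq_zero (Finset.mem_univ i₀) ?_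
    simp only [Sum.map_inr, id, hstd, witnessRowSlot]
    have := hn i₀
    split_ifs <;> rw [coordFun_stdVec (by omega)] <;> simp
  · refine Finset.prod_eq_zero (Finset.mem_univ i₀) ?_
    simp [witnessVec, witnessRowSlot, show (j : ℕ) + 2 ≤ n i₀ by omega, coordFun_lineVec]
  · simp only [Matrix.of_apply, Sum.map_inr, id, Matrix.fromBlocks_apply₂₂, Matrix.one_apply]
    split_ifs with hjj
    · subst hjj
      refine Finset.prod_eq_one fun i _ => ?_
      by_cases h : (j : ℕ) + 2 ≤ n i <;>
        simp [witnessVec, witnessRowSlot, h, coordFun_stdVec, coordFun_lineVec]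
    · refine Finset.prod_eq_zero (Finset.mem_univ i₀) ?_
      simp [hstd, witnessRowSlot, show (j : ℕ) + 2 ≤ n i₀ by omega, coordFun_stdVec,
        Fin.val_inj, hjj]

theorem le_finrank_span_tprod_witnessVec {t : Fin N ⊕ Fin L → K} (ht : Function.Injective t)
    (hn : ∀ i, 0 < n i) (hN : k + 1 ≤ N) {i₀ : Fin k} (hL : L + 1 ≤ n i₀) :
    k + 1 + L ≤ finrank K (Submodule.span K (Set.range fun x => tprod K (witnessVec n t x))) := by
  classical
  set col := fun c : Fin (k + 1) ⊕ Fin L => tprod K (witnessVec n t (Sum.map (Fin.castLE hN) id c))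
  have hcol : LinearIndependent K col := by
    refine linearIndependent_of_det_ne_zero
      (fun r => dualDistrib (tprod K fun i => coordFun (n i) (witnessRowSlot n r i))) col ?_
    simp only [col, dualDistrib_apply]
    rw [witnessMatrix_eq_fromBlocks t hn hN hL, Matrix.det_fromBlocks_zero₂₁, Matrix.det_transpose,
      Matrix.det_one, mul_one]
    exact Matrix.det_vandermonde_ne_zero_iff.2
      (ht.comp (Sum.inl_injective.comp (Fin.castLE_injective hN)))
  calc k + 1 + L = Fintype.card (Fin (k + 1) ⊕ Fin L) := by simp
    _ = finrank K (Submodule.span K (Set.range col)) := (finrank_span_eq_card hcol).symm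
    _ ≤ _ := Submodule.finrank_mono (Submodule.span_mono (Set.range_comp_subset_range
      (Sum.map (Fin.castLE hN) id) fun x => tprod K (witnessVec n t x)))

theorem eSet_range_witnessPt {t : Fin N ⊕ Fin L → K} (ht : Function.Injective t)
    (hn : ∀ i, 0 < n i) (hN : k + 1 ≤ N) {i₀ : Fin k} (hL : L + 1 ≤ n i₀) :
    eSet (Set.range (witnessPt n t)) = N - (k + 1) := by
  have hspan : Submodule.span K (segreVec '' Set.range (witnessPt n t)) =
      Submodule.span K (Set.range fun x => tprod K (witnessVec n t x)) := by
    rw [← Set.range_comp]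
    exact span_range_segreVec_mk _ (witnessVec_ne_zero n t)
  have hupper := finrank_span_tprod_witnessVec_le (n := n) t
  have hlower := le_finrank_span_tprod_witnessVec ht hn hN hL
  rw [eSet, ncard_range_witnessPt ht hn i₀, hspan]
  omega

end Witness

theorem exists_minimal_nondeg_card_eq_m_add_k_add_e_general
    {K : Type*} [Field K] [Infinite K] {k : ℕ} {n : Fin k → ℕ}
    (hk2 : 2 ≤ k) (hn : ∀ i, 0 < n i) (e : ℕ) :
    ∃ S : Set (MultiProj K n), S.Finite ∧ IsMinimal S ∧ Nondeg S ∧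
      eSet S = e ∧ S.ncard = Finset.univ.sup n + k + e := by
  obtain ⟨i₀, -, hi₀⟩ := Finset.exists_mem_eq_sup Finset.univ
    (Finset.univ_nonempty_iff.2 ⟨⟨0, by omega⟩⟩) n
  have hle : ∀ i, n i ≤ n i₀ := fun i => hi₀ ▸ Finset.le_sup (Finset.mem_univ i)
  have hpos := hn i₀
  set t : Fin (k + 1 + e) ⊕ Fin (n i₀ - 1) → K :=
    Infinite.natEmbedding K ∘ Fin.val ∘ finSumFinEquiv
  have ht : Function.Injective t :=
    (Infinite.natEmbedding K).injective.comp (Fin.val_injective.comp finSumFinEquiv.injective)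
  refine ⟨Set.range (witnessPt n t), Set.finite_range _, isMinimal_range_witnessPt hk2 ht hn,
    nondeg_range_witnessPt ht (by omega) fun i => by have := hle i; omega, ?_, ?_⟩
  · rw [eSet_range_witnessPt ht hn (Nat.le_add_right _ _) (by omega : n i₀ - 1 + 1 ≤ n i₀)]
    omega
  · rw [ncard_range_witnessPt ht hn i₀, hi₀]
    omega

theorem exists_minimal_nondeg_card_eq_m_add_k_add_e
    {K : Type*} [Field K] [Infinite K] {k : ℕ} {n : Fin k → ℕ}
    (hk2 : 2 ≤ k) (hn : ∀ i, 0 < n i) (e : ℕ) (he : 1 ≤ e) :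
    ∃ S : Set (MultiProj K n), S.Finite ∧ IsMinimal S ∧ Nondeg S ∧
      eSet S = e ∧ S.ncard = Finset.univ.sup n + k + e :=
  exists_minimal_nondeg_card_eq_m_add_k_add_e_general hk2 hn e
end

section
/- Let K be an infinite field. Fix positive integers e, k and n_1,...,n_k with k ≥ 2, and set m := max{n_1 − 1, n_2, ..., n_k}. Then there exists a nondegenerate finite set S ⊆ Y = P^{n_1} × ... × P^{n_k} with #S = e + 2 + m and e(S) = e. -/
open scoped LinearAlgebra.Projectivization
open Projectivization

/-!
Put `i₀ := 0` and `m := max (n i₀ - 1, n i for i ≠ i₀)`. The multi-indices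
`c j = (j, j - 1, …, j - 1)` (entry `j` in factor `i₀`, `j - 1` in the others, replaced by `0`
where it exceeds `n i`) are pairwise distinct for `j ≤ m + 1` and together use every coordinate
of every factor. Let `S` consist of the `m + 2` points of `Y` whose Segre images are the basis
tensors `e_{c j}`, and `e` further points on the line of `Y` through the points for `c 0` and
`c 1`, which differ only in factor `i₀`. The Segre map sends this line to a line, so `⟨ν(S)⟩` is
spanned by the `m + 2` independent tensors `e_{c j}`, while `#S = e + m + 2`; hence `e(S) = e`.
-/

open Function Set Submodule

theorem Projectivization.mul_eq_mul_of_mk_eq_mk {K ι : Type*} [Field K] {v w : ι → K}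
    {hv : v ≠ 0} {hw : w ≠ 0} (h : mk K v hv = mk K w hw) (a b : ι) :
    v a * w b = v b * w a := by
  obtain ⟨u, rfl⟩ := (mk_eq_mk_iff K v w hv hw).1 h
  simp only [Pi.smul_apply, Units.smul_def, smul_eq_mul]
  ring

theorem Submodule.span_range_eq_of_forall_exists_unit_smul {R M ι : Type*} [Ring R]
    [AddCommGroup M] [Module R M] {f g : ι → M} (h : ∀ t, ∃ u : Rˣ, f t = u • g t) :
    span R (range f) = span R (range g) := by
  simp only [span_range_eq_iSup]
  refine iSup_congr fun t => ?_
  obtain ⟨u, hu⟩ := h t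
  rw [hu, span_singleton_group_smul_eq]

namespace MultiProj

section Construction

variable {K : Type*} [Field K] {k : ℕ} {n : Fin k → ℕ}

def pointOf (v : ∀ i, Fin (n i + 1) → K) (hv : ∀ i, v i ≠ 0) : MultiProj K n :=
  fun i => mk K (v i) (hv i)

theorem exists_rep_pointOf_eq_smul (v : ∀ i, Fin (n i + 1) → K) (hv : ∀ i, v i ≠ 0)
    (i : Fin k) : ∃ u : Kˣ, (pointOf v hv i).rep = u • v i :=
  (mk_eq_mk_iff K _ _ _ _).1 (mk_rep (pointOf v hv i)) |>.imp fun _ h => h.symm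

theorem exists_segreVec_pointOf_eq_smul (v : ∀ i, Fin (n i + 1) → K) (hv : ∀ i, v i ≠ 0) :
    ∃ u : Kˣ, segreVec (pointOf v hv) = u • PiTensorProduct.tprod K v := by
  choose u hu using exists_rep_pointOf_eq_smul v hv
  refine ⟨∏ i, u i, ?_⟩
  rw [segreVec, funext hu, Units.smul_def, Units.coe_prod]
  exact MultilinearMap.map_smul_univ _ _ _

theorem mul_eq_mul_of_pointOf_eq {v w : ∀ i, Fin (n i + 1) → K} {hv : ∀ i, v i ≠ 0}
    {hw : ∀ i, w i ≠ 0} (h : pointOf v hv = pointOf w hw) (i : Fin k) (a b : Fin (n i + 1)) :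
    v i a * w i b = v i b * w i a :=
  Projectivization.mul_eq_mul_of_mk_eq_mk (congrFun h i) a b

variable (K) in
def stdVecs (c : ∀ i, Fin (n i + 1)) : ∀ i, Fin (n i + 1) → K :=
  fun i => Pi.single (c i) 1

variable (K) in
def lineVecs (c : ∀ i, Fin (n i + 1)) (i₀ : Fin k) (r : Fin (n i₀ + 1)) (τ : K) :
    ∀ i, Fin (n i + 1) → K :=
  update (stdVecs K c) i₀ (Pi.single (c i₀) 1 + τ • Pi.single r 1)

theorem stdVecs_ne_zero (c : ∀ i, Fin (n i + 1)) (i : Fin k) : stdVecs K c i ≠ 0 := by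
  simp [stdVecs]

theorem linearIndependent_tprod_stdVecs {ι : Type*} {C : ι → ∀ i, Fin (n i + 1)}
    (hC : Injective C) :
    LinearIndependent K fun j => PiTensorProduct.tprod K (stdVecs K (C j)) := by
  let B := Basis.piTensorProduct fun i => Pi.basisFun K (Fin (n i + 1))
  have hB : ⇑B ∘ C = fun j => PiTensorProduct.tprod K (stdVecs K (C j)) := by
    funext j
    simp only [B, comp_apply, Basis.piTensorProduct_apply, Pi.basisFun_apply]
    rfl
  exact hB ▸ B.linearIndependent.comp C hC

theorem tprod_lineVecs (c : ∀ i, Fin (n i + 1)) (i₀ : Fin k) (r : Fin (n i₀ + 1)) (τ : K) :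
    PiTensorProduct.tprod K (lineVecs K c i₀ r τ) =
      PiTensorProduct.tprod K (stdVecs K c) +
        τ • PiTensorProduct.tprod K (stdVecs K (update c i₀ r)) := by
  have hupd : stdVecs K (update c i₀ r) = update (stdVecs K c) i₀ (Pi.single r 1) := by
    funext i
    exact apply_update (fun i (a : Fin (n i + 1)) => (Pi.single a 1 : Fin (n i + 1) → K)) c i₀ r i
  rw [lineVecs, MultilinearMap.map_update_add, MultilinearMap.map_update_smul, hupd]
  congr 2
  exact update_eq_self i₀ (stdVecs K c)

variable {c : ∀ i, Fin (n i + 1)} {i₀ : Fin k} {r : Fin (n i₀ + 1)}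

theorem lineVecs_self_apply_self (hr : r ≠ c i₀) (τ : K) :
    lineVecs K c i₀ r τ i₀ (c i₀) = 1 := by
  simp [lineVecs, hr.symm]

theorem lineVecs_self_apply_right (hr : r ≠ c i₀) (τ : K) : lineVecs K c i₀ r τ i₀ r = τ := by
  simp [lineVecs, hr]

theorem lineVecs_ne_zero (hr : r ≠ c i₀) (τ : K) (i : Fin k) : lineVecs K c i₀ r τ i ≠ 0 := by
  rcases eq_or_ne i i₀ with rfl | hi
  · exact fun h => one_ne_zero ((lineVecs_self_apply_self hr τ).symm.trans (congrFun h _))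
  · simpa [lineVecs, hi] using stdVecs_ne_zero c i

variable (K) in
def stdPoint (c : ∀ i, Fin (n i + 1)) : MultiProj K n :=
  pointOf (stdVecs K c) (stdVecs_ne_zero c)

def linePoint (hr : r ≠ c i₀) (τ : K) : MultiProj K n :=
  pointOf (lineVecs K c i₀ r τ) (lineVecs_ne_zero hr τ)

theorem stdPoint_injective :
    Injective (stdPoint K : (∀ i, Fin (n i + 1)) → MultiProj K n) := by
  intro c d h
  funext i
  have := mul_eq_mul_of_pointOf_eq h i (c i) (d i)
  simp only [stdVecs, Pi.single_apply] at this
  by_contra hcd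
  simp [hcd, Ne.symm hcd] at this

variable (hr : r ≠ c i₀)

theorem linePoint_injective : Injective (linePoint hr : K → MultiProj K n) := by
  intro τ τ' h
  have := mul_eq_mul_of_pointOf_eq h i₀ (c i₀) r
  rw [lineVecs_self_apply_self hr, lineVecs_self_apply_self hr, lineVecs_self_apply_right hr,
    lineVecs_self_apply_right hr] at this
  simpa [eq_comm] using this

theorem linePoint_ne_stdPoint {τ : K} (hτ : τ ≠ 0) (d : ∀ i, Fin (n i + 1)) :
    linePoint hr τ ≠ stdPoint K d := by
  intro h
  by_cases hd : d i₀ = c i₀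
  · have := mul_eq_mul_of_pointOf_eq h i₀ (c i₀) r
    rw [lineVecs_self_apply_self hr, lineVecs_self_apply_right hr] at this
    exact hτ (by simpa [stdVecs, hd, hr] using this.symm)
  · have := mul_eq_mul_of_pointOf_eq h i₀ (c i₀) (d i₀)
    rw [lineVecs_self_apply_self hr] at this
    simp [stdVecs, hd] at this

variable {α ι : Type*} (τ : α → K) (C : ι → ∀ i, Fin (n i + 1))

def lineStdPoints : α ⊕ ι → MultiProj K n :=
  Sum.elim (fun t => linePoint hr (τ t)) (fun j => stdPoint K (C j))

variable {τ C}

theorem lineStdPoints_injective (hτ : Injective τ) (hτ₀ : ∀ t, τ t ≠ 0) (hC : Injective C) :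
    Injective (lineStdPoints hr τ C) :=
  ((linePoint_injective hr).comp hτ).sumElim (stdPoint_injective.comp hC)
    fun t j => linePoint_ne_stdPoint hr (hτ₀ t) (C j)

theorem span_segreVec_lineStdPoints (hc : c ∈ range C) (hcr : update c i₀ r ∈ range C) :
    span K (segreVec '' range (lineStdPoints hr τ C)) =
      span K (range fun j => PiTensorProduct.tprod K (stdVecs K (C j))) := by
  rw [← range_comp, span_range_eq_of_forall_exists_unit_smul
    (g := Sum.elim (fun t => PiTensorProduct.tprod K (lineVecs K c i₀ r (τ t)))
      (fun j => PiTensorProduct.tprod K (stdVecs K (C j))))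
    (Sum.rec (fun _ => exists_segreVec_pointOf_eq_smul _ _)
      (fun _ => exists_segreVec_pointOf_eq_smul _ _)), Sum.elim_range]
  refine le_antisymm (span_le.2 (union_subset ?_ subset_span)) (span_mono subset_union_right)
  rintro _ ⟨t, rfl⟩
  obtain ⟨j₀, hj₀⟩ := hc
  obtain ⟨j₁, hj₁⟩ := hcr
  dsimp only
  rw [tprod_lineVecs, ← hj₁, ← hj₀]
  exact add_mem (subset_span ⟨j₀, rfl⟩) (smul_mem _ _ (subset_span ⟨j₁, rfl⟩))

theorem eSet_lineStdPoints [Fintype α] [Fintype ι] (hτ : Injective τ) (hτ₀ : ∀ t, τ t ≠ 0)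
    (hC : Injective C) (hc : c ∈ range C) (hcr : update c i₀ r ∈ range C) :
    eSet (range (lineStdPoints hr τ C)) = Fintype.card α := by
  rw [eSet, span_segreVec_lineStdPoints hr hc hcr,
    finrank_span_eq_card (linearIndependent_tprod_stdVecs hC),
    ncard_range_of_injective (lineStdPoints_injective hr hτ hτ₀ hC)]
  simp

theorem nondeg_lineStdPoints (hcover : ∀ i (a : Fin (n i + 1)), ∃ j, C j i = a) :
    Nondeg (range (lineStdPoints hr τ C)) := by
  intro i
  rw [← range_comp, span_range_eq_of_forall_exists_unit_smul
    (g := Sum.elim (fun t => lineVecs K c i₀ r (τ t) i) (fun j => stdVecs K (C j) i))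
    (Sum.rec (fun _ => exists_rep_pointOf_eq_smul _ _ i)
      (fun _ => exists_rep_pointOf_eq_smul _ _ i)), Sum.elim_range, eq_top_iff,
    ← (Pi.basisFun K (Fin (n i + 1))).span_eq]
  refine span_mono (subset_union_of_subset_right ?_ _)
  rintro _ ⟨a, rfl⟩
  obtain ⟨j, hj⟩ := hcover i a
  exact ⟨j, by simp [stdVecs, hj]⟩

end Construction

section DiagonalIndices

variable {k : ℕ}

def indexShift (i₀ i : Fin k) : ℕ := if i = i₀ then 0 else 1

def diagIndex (n : Fin k → ℕ) (i₀ : Fin k) (j : ℕ) (i : Fin k) : Fin (n i + 1) :=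
  if h : j - indexShift i₀ i ≤ n i then ⟨j - indexShift i₀ i, Nat.lt_succ_of_le h⟩ else 0

def shiftedMaxDim (n : Fin k → ℕ) (i₀ : Fin k) : ℕ :=
  Finset.univ.sup fun i => if i = i₀ then n i - 1 else n i

variable {n : Fin k → ℕ} {i₀ : Fin k} {j j' : ℕ}

theorem diagIndex_one :
    diagIndex n i₀ 1 = update (diagIndex n i₀ 0) i₀ (diagIndex n i₀ 1 i₀) := by
  funext i
  rcases eq_or_ne i i₀ with rfl | hi
  · simp
  · simp [diagIndex, indexShift, hi]

theorem val_diagIndex_of_le {i : Fin k} (h : j - indexShift i₀ i ≤ n i) :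
    (diagIndex n i₀ j i : ℕ) = j - indexShift i₀ i := by
  simp [diagIndex, h]

theorem diagIndex_add_indexShift (i : Fin k) (a : Fin (n i + 1)) :
    diagIndex n i₀ (a + indexShift i₀ i) i = a :=
  Fin.ext <| (val_diagIndex_of_le (by omega)).trans (by omega)

theorem add_indexShift_le_shiftedMaxDim_add_one (i : Fin k) :
    n i + indexShift i₀ i ≤ shiftedMaxDim n i₀ + 1 := by
  have : _ ≤ shiftedMaxDim n i₀ :=
    Finset.le_sup (f := fun i => if i = i₀ then n i - 1 else n i) (Finset.mem_univ i)
  unfold indexShift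
  split_ifs at * <;> omega

theorem exists_indexShift_lt_of_le_shiftedMaxDim (hn₀ : 0 < n i₀) (hj : 1 ≤ j)
    (hj' : j ≤ shiftedMaxDim n i₀ + 1) :
    ∃ i, indexShift i₀ i < j ∧ j ≤ n i + indexShift i₀ i := by
  obtain ⟨i, -, hi⟩ := Finset.exists_mem_eq_sup Finset.univ ⟨i₀, Finset.mem_univ _⟩
    fun i => if i = i₀ then n i - 1 else n i
  rw [← shiftedMaxDim] at hi
  by_cases hj₁ : j = 1
  · exact ⟨i₀, by simp [indexShift, hj₁], by simp [indexShift]; omega⟩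
  · refine ⟨i, ?_, ?_⟩ <;> by_cases h : i = i₀ <;> simp [indexShift, h] at hi ⊢ <;> omega

theorem diagIndex_ne_of_lt (hn₀ : 0 < n i₀) (hjj' : j < j')
    (hj' : j' ≤ shiftedMaxDim n i₀ + 1) : diagIndex n i₀ j ≠ diagIndex n i₀ j' := by
  obtain ⟨i, hi, hi'⟩ := exists_indexShift_lt_of_le_shiftedMaxDim hn₀ (by omega) hj'
  intro h
  have hval := congrArg Fin.val (congrFun h i)
  rw [val_diagIndex_of_le (j := j') (by omega)] at hval
  unfold diagIndex at hval
  split_ifs at hval <;> simp at hval <;> omega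

theorem diagIndex_injOn (hn₀ : 0 < n i₀) :
    InjOn (diagIndex n i₀) (Iic (shiftedMaxDim n i₀ + 1)) := by
  intro j hj j' hj' h
  by_contra hne
  rcases lt_or_gt_of_ne hne with hlt | hlt
  · exact diagIndex_ne_of_lt hn₀ hlt hj' h
  · exact diagIndex_ne_of_lt hn₀ hlt hj h.symm

end DiagonalIndices

end MultiProj

open MultiProj

theorem exists_nondeg_card_e_add_two_add_m
    {K : Type*} [Field K] [Infinite K] {k : ℕ} {n : Fin k → ℕ}
    (hk2 : 2 ≤ k) (hn : ∀ i, 0 < n i) (e : ℕ) :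
    ∃ S : Set (MultiProj K n), S.Finite ∧ Nondeg S ∧
      S.ncard = e + 2 +
        Finset.univ.sup (fun i => if i = (⟨0, by omega⟩ : Fin k) then n i - 1 else n i) ∧
      eSet S = e := by
  set i₀ : Fin k := ⟨0, by omega⟩
  change ∃ S, _ ∧ _ ∧ _ = e + 2 + shiftedMaxDim n i₀ ∧ _
  set m := shiftedMaxDim n i₀
  have : Infinite ({0}ᶜ : Set K) := (finite_singleton 0).infinite_compl.to_subtype
  let σ : Fin e ↪ ({0}ᶜ : Set K) := Fin.valEmbedding.trans (Infinite.natEmbedding _)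
  let τ : Fin e → K := fun t => σ t
  have hτ : Injective τ := Subtype.val_injective.comp σ.injective
  let C : Fin (m + 2) → ∀ i, Fin (n i + 1) := fun j => diagIndex n i₀ j
  have hC : Injective C := fun j j' h =>
    Fin.ext (diagIndex_injOn (hn i₀) (Nat.lt_succ_iff.1 j.2) (Nat.lt_succ_iff.1 j'.2) h)
  have hr : diagIndex n i₀ 1 i₀ ≠ diagIndex n i₀ 0 i₀ := fun h =>
    diagIndex_ne_of_lt (hn i₀) zero_lt_one (by omega) (by rw [diagIndex_one, h, update_eq_self])
  have hc : diagIndex n i₀ 0 ∈ range C := ⟨0, rfl⟩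
  have hcr : update (diagIndex n i₀ 0) i₀ (diagIndex n i₀ 1 i₀) ∈ range C :=
    ⟨1, by simpa [C] using diagIndex_one⟩
  have hcover (i : Fin k) (a : Fin (n i + 1)) : ∃ j, C j i = a :=
    have : n i + indexShift i₀ i ≤ m + 1 := add_indexShift_le_shiftedMaxDim_add_one i
    ⟨⟨a + indexShift i₀ i, by omega⟩, diagIndex_add_indexShift i a⟩
  refine ⟨range (lineStdPoints hr τ C), finite_range _, nondeg_lineStdPoints hr hcover, ?_,
    (eSet_lineStdPoints hr hτ (fun t => (σ t).2) hC hc hcr).trans (Fintype.card_fin e)⟩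
  rw [ncard_range_of_injective (lineStdPoints_injective hr hτ (fun t => (σ t).2) hC),
    Nat.card_sum, Nat.card_fin, Nat.card_fin]
  omega
end

section
/- Let K be an infinite field and let S ⊆ Y = P^{n_1} × ... × P^{n_k} be a nonempty finite linearly independent set. Suppose there is an index i ∈ {1,...,k} such that π_i(S) does not span P^{n_i}. Then S admits a linearly independent elementary increasing in the i-th direction: there exist o ∈ S and distinct points o', o'' ∈ Y such that π_j(o') = π_j(o'') = π_j(o) for all j ≠ i, the three points π_i(o), π_i(o'), π_i(o'') are pairwise distinct and lie on a common projective line in P^{n_i}, and the set (S \ {o}) ∪ {o', o''} (of cardinality #S + 1) is linearly independent. -/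
/-!
Pick `o ∈ S` and a point `q ∈ P^{n_i}` outside the span of `π_i(S)`, and let `o'`, `o''` be `o`
with its `i`-th coordinate replaced by `q` and by the point `[o_i + q]` of the line through `o_i`
and `q`. A linear form on the `i`-th factor that vanishes on `π_i(S)` but not at `q`, tensored with
forms not vanishing at the other coordinates of `o`, kills `ν(S)` but not `ν(o')`, so
`ν(o') ∉ ⟨ν(S)⟩`. As `ν(o'')` is a multiple of `ν(o) + ν(o')`, the span of
`ν((S \ {o}) ∪ {o', o''})` contains `⟨ν(S)⟩` and `ν(o')`, hence has dimension at least `#S + 1`.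
-/

open scoped LinearAlgebra.Projectivization
open Projectivization

open Function Submodule

section

variable {K M α : Type*} [Field K] [AddCommGroup M] [Module K M]

theorem Set.ncard_diff_singleton_union_pair {S : Set α} (hS : S.Finite) {o a b : α} (ho : o ∈ S)
    (ha : a ∉ S) (hb : b ∉ S) (hab : a ≠ b) : ((S \ {o}) ∪ {a, b}).ncard = S.ncard + 1 := by
  have hdisj : Disjoint (S \ {o}) {a, b} := by
    rw [Set.disjoint_insert_right, Set.disjoint_singleton_right]
    exact ⟨fun h => ha h.1, fun h => hb h.1⟩
  rw [Set.ncard_union_eq hdisj hS.sdiff (Set.toFinite _), Set.ncard_pair hab,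
    ← Set.ncard_sdiff_singleton_add_one ho hS]

theorem finrank_span_insert_of_notMem {s : Set M} (hs : s.Finite) {x : M} (hx : x ∉ span K s) :
    Module.finrank K (span K (insert x s)) = Module.finrank K (span K s) + 1 := by
  have : FiniteDimensional K (span K s) := FiniteDimensional.span_of_finite K hs
  have hx0 : x ≠ 0 := fun h => hx (h ▸ zero_mem _)
  have h := finrank_sup_add_finrank_inf_eq (span K s) (K ∙ x)
  rw [(disjoint_span_singleton_of_notMem hx).eq_bot, finrank_bot, finrank_span_singleton hx0] at h
  rw [span_insert, sup_comm]
  omega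

theorem mem_span_pair_of_eq_smul_add {x y z : M} (c : Kˣ) (h : z = c • (x + y)) :
    x ∈ span K {y, z} ∧ y ∈ span K {x, z} := by
  have hxy : x + y = (c⁻¹ : Kˣ) • z := by rw [h, inv_smul_smul]
  refine ⟨mem_span_pair.2 ⟨-1, (c⁻¹ : Kˣ), ?_⟩, mem_span_pair.2 ⟨-1, (c⁻¹ : Kˣ), ?_⟩⟩ <;>
    rw [← Units.smul_def, ← hxy] <;> module

variable {f : α → M} {S : Set α}

theorem notMem_of_apply_notMem_span {x : α} (hx : f x ∉ span K (f '' S)) : x ∉ S :=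
  fun h => hx (subset_span (Set.mem_image_of_mem f h))

theorem apply_notMem_span_of_mem_span_pair {o a b : α} (ho : o ∈ S) (ha : f a ∉ span K (f '' S))
    (haob : f a ∈ span K {f o, f b}) : f b ∉ span K (f '' S) := fun hb =>
  ha <| span_le.2 (Set.insert_subset (subset_span (Set.mem_image_of_mem f ho))
    (Set.singleton_subset_iff.2 hb)) haob

theorem finrank_span_image_lt_diff_singleton_union_pair (hS : S.Finite) {o a b : α}
    (ha : f a ∉ span K (f '' S)) (hoab : f o ∈ span K {f a, f b}) :
    Module.finrank K (span K (f '' S)) < Module.finrank K (span K (f '' ((S \ {o}) ∪ {a, b}))) := by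
  set T := span K (f '' ((S \ {o}) ∪ {a, b}))
  have : FiniteDimensional K T :=
    FiniteDimensional.span_of_finite K ((hS.sdiff.union (Set.toFinite _)).image f)
  have hpair : span K {f a, f b} ≤ T := span_mono (by simp [Set.insert_subset_iff])
  have hle : span K (insert (f a) (f '' S)) ≤ T := by
    refine span_le.2 (Set.insert_subset (hpair (subset_span (by simp))) ?_)
    rintro _ ⟨x, hx, rfl⟩
    by_cases hxo : x = o
    · exact hxo ▸ hpair hoab
    · exact subset_span ⟨x, Or.inl ⟨hx, hxo⟩, rfl⟩
  have := finrank_mono hle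
  rw [finrank_span_insert_of_notMem (hS.image f) ha] at this
  omega

end

namespace Projectivization

open scoped LinearAlgebra.Projectivization

variable {K V : Type*} [Field K] [AddCommGroup V] [Module K V]

theorem rep_mk_mem_iff {U : Submodule K V} {v : V} (hv : v ≠ 0) :
    (mk K v hv).rep ∈ U ↔ v ∈ U := by
  obtain ⟨a, ha⟩ := exists_smul_eq_mk_rep K v hv
  rw [← ha, Submodule.smul_mem_iff']

theorem exists_rep_notMem_of_ne_top {U : Submodule K V} (hU : U ≠ ⊤) : ∃ q : ℙ K V, q.rep ∉ U := by
  obtain ⟨v, -, hv⟩ := SetLike.exists_of_lt (lt_top_iff_ne_top.2 hU)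
  have hv0 : v ≠ 0 := fun h => hv (h ▸ U.zero_mem)
  exact ⟨mk K v hv0, (rep_mk_mem_iff hv0).not.2 hv⟩

theorem linearIndependent_rep_pair {p q : ℙ K V} (h : p ≠ q) :
    LinearIndependent K ![p.rep, q.rep] := by
  rw [← independent_pair_iff_ne, independent_iff] at h
  convert h using 1
  ext j
  fin_cases j <;> rfl

theorem rep_add_rep_ne_zero {p q : ℙ K V} (h : p ≠ q) : p.rep + q.rep ≠ 0 := by
  simpa using LinearIndependent.pair_iff.1 (linearIndependent_rep_pair h) 1 1

theorem mk_rep_add_rep_ne_left {p q : ℙ K V} (h : p ≠ q) :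
    mk K (p.rep + q.rep) (rep_add_rep_ne_zero h) ≠ p := by
  intro heq
  obtain ⟨a, ha⟩ := (mk_eq_mk_iff' K _ _ (rep_add_rep_ne_zero h) p.rep_nonzero).1
    (heq.trans (mk_rep p).symm)
  have := LinearIndependent.pair_iff.1 (linearIndependent_rep_pair h) (a - 1) (-1)
    (by rw [sub_smul, ha]; module)
  simp at this

theorem mk_rep_add_rep_ne_right {p q : ℙ K V} (h : p ≠ q) :
    mk K (p.rep + q.rep) (rep_add_rep_ne_zero h) ≠ q := by
  intro heq
  obtain ⟨a, ha⟩ := (mk_eq_mk_iff' K _ _ (rep_add_rep_ne_zero h) q.rep_nonzero).1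
    (heq.trans (mk_rep q).symm)
  have := LinearIndependent.pair_iff.1 (linearIndependent_rep_pair h) 1 (1 - a)
    (by rw [sub_smul, ha]; module)
  simp at this

theorem finrank_span_rep_pair {p q : ℙ K V} (h : p ≠ q) :
    Module.finrank K (Submodule.span K {p.rep, q.rep}) = 2 := by
  rw [← Matrix.range_cons_cons_empty p.rep q.rep ![]]
  simp [finrank_span_eq_card (linearIndependent_rep_pair h)]

end Projectivization

theorem PiTensorProduct.tprod_notMem_span_of_forall_mem {K ι : Type*} [Field K] [Fintype ι]
    {V : ι → Type*} [∀ j, AddCommGroup (V j)] [∀ j, Module K (V j)] {i : ι}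
    {U : Submodule K (V i)} {s : Set (∀ j, V j)} (hs : ∀ g ∈ s, g i ∈ U) {w : ∀ j, V j}
    (hw : ∀ j, w j ≠ 0) (hwi : w i ∉ U) : tprod K w ∉ span K (tprod K '' s) := by
  classical
  obtain ⟨φ, hφw, hφU⟩ := U.exists_dual_map_eq_bot_of_notMem hwi inferInstance
  choose ψ hψ using fun j => Module.Projective.exists_dual_ne_zero K (hw j)
  let Λ := lift ((MultilinearMap.mkPiAlgebra K ι K).compLinearMap (update ψ i φ))
  have hΛ (g : ∀ j, V j) : Λ (tprod K g) = ∏ j, update ψ i φ j (g j) := by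
    simp [Λ]
  have hs_ker : span K (tprod K '' s) ≤ LinearMap.ker Λ := by
    refine span_le.2 ?_
    rintro _ ⟨g, hg, rfl⟩
    refine (hΛ g).trans (Finset.prod_eq_zero (Finset.mem_univ i) ?_)
    rw [update_self]
    exact LinearMap.le_ker_iff_map.2 hφU (hs g hg)
  have hw_ker : Λ (tprod K w) ≠ 0 := by
    rw [hΛ, Finset.prod_ne_zero_iff]
    intro j _
    rcases eq_or_ne j i with rfl | hji
    · simpa using hφw
    · simpa [update_of_ne hji] using hψ j
  exact fun h => hw_ker (hs_ker h)

section Segre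

variable {K : Type*} [Field K] {k : ℕ} {n : Fin k → ℕ}

theorem segreVec_update (x : MultiProj K n) (i : Fin k) (v : ℙ K (Fin (n i + 1) → K)) :
    segreVec (update x i v) = PiTensorProduct.tprod K (update (fun j => (x j).rep) i v.rep) := by
  unfold segreVec
  congr 1
  funext j
  exact apply_update (fun _ p => p.rep) x i v j

theorem segreVec_update_notMem_span {S : Set (MultiProj K n)} (x : MultiProj K n) {i : Fin k}
    {v : ℙ K (Fin (n i + 1) → K)} (hv : v.rep ∉ span K ((fun y => (y i).rep) '' S)) :
    segreVec (update x i v) ∉ span K (segreVec '' S) := by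
  have himage : segreVec '' S = PiTensorProduct.tprod K '' ((fun y j => (y j).rep) '' S) := by
    rw [Set.image_image]
    rfl
  rw [segreVec_update, himage]
  refine PiTensorProduct.tprod_notMem_span_of_forall_mem (i := i)
    (U := span K ((fun y => (y i).rep) '' S)) ?_ ?_ (by simpa using hv)
  · rintro _ ⟨y, hy, rfl⟩
    exact subset_span ⟨y, hy, rfl⟩
  · intro j
    rcases eq_or_ne j i with rfl | hji
    · simpa using v.rep_nonzero
    · simpa [update_of_ne hji] using (x j).rep_nonzero

theorem exists_segreVec_update_mk_add (x : MultiProj K n) {i : Fin k}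
    {v : ℙ K (Fin (n i + 1) → K)} (h : x i ≠ v) : ∃ c : Kˣ,
    segreVec (update x i (mk K ((x i).rep + v.rep) (rep_add_rep_ne_zero h))) =
      c • (segreVec x + segreVec (update x i v)) := by
  obtain ⟨c, hc⟩ := exists_smul_eq_mk_rep K _ (rep_add_rep_ne_zero h)
  refine ⟨c, ?_⟩
  rw [segreVec_update, segreVec_update, ← hc, Units.smul_def, MultilinearMap.map_update_smul,
    MultilinearMap.map_update_add, update_eq_self]
  rfl

end Segre

theorem exists_linearly_independent_elementary_increasing_general
    {K : Type*} [Field K] {k : ℕ} {n : Fin k → ℕ}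
    (S : Set (MultiProj K n)) (hSfin : S.Finite) (hSne : S.Nonempty)
    (hind : eSet S = 0) (i : Fin k)
    (hnospan : Submodule.span K ((fun x => (x i).rep) '' S) ≠ ⊤) :
    ∃ o ∈ S, ∃ o' o'' : MultiProj K n,
      o' ≠ o'' ∧
      (∀ j, j ≠ i → o' j = o j ∧ o'' j = o j) ∧
      o i ≠ o' i ∧ o i ≠ o'' i ∧ o' i ≠ o'' i ∧
      (∃ W : Submodule K (Fin (n i + 1) → K), Module.finrank K ↥W = 2 ∧
        (o i).rep ∈ W ∧ (o' i).rep ∈ W ∧ (o'' i).rep ∈ W) ∧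
      ((S \ {o}) ∪ {o', o''}).ncard = S.ncard + 1 ∧
      eSet ((S \ {o}) ∪ {o', o''}) = 0 := by
  obtain ⟨o, ho⟩ := hSne
  obtain ⟨q, hq⟩ := exists_rep_notMem_of_ne_top hnospan
  have hoq : o i ≠ q := fun h => hq (h ▸ subset_span ⟨o, ho, rfl⟩)
  have hqr := (mk_rep_add_rep_ne_right hoq).symm
  have ho'o'' : update o i q ≠ update o i (mk K ((o i).rep + q.rep) (rep_add_rep_ne_zero hoq)) :=
    fun h => hqr (by simpa using congrFun h i)
  have hν' := segreVec_update_notMem_span o hq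
  obtain ⟨c, hν''⟩ := exists_segreVec_update_mk_add o hoq
  obtain ⟨hνo, hν'_pair⟩ := mem_span_pair_of_eq_smul_add c hν''
  have hν''_notMem := apply_notMem_span_of_mem_span_pair ho hν' hν'_pair
  have hcard := Set.ncard_diff_singleton_union_pair hSfin ho (notMem_of_apply_notMem_span hν')
    (notMem_of_apply_notMem_span hν''_notMem) ho'o''
  have hrank := finrank_span_image_lt_diff_singleton_union_pair hSfin hν' hνo
  refine ⟨o, ho, update o i q, _, ho'o'',
    fun j hj => ⟨update_of_ne hj _ _, update_of_ne hj _ _⟩, by simpa using hoq,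
    by simpa using (mk_rep_add_rep_ne_left hoq).symm, by simpa using hqr,
    ⟨span K {(o i).rep, q.rep}, finrank_span_rep_pair hoq, ?_, ?_, ?_⟩, hcard, ?_⟩
  · exact subset_span (by simp)
  · simpa using subset_span (by simp)
  · simpa [rep_mk_mem_iff] using add_mem (subset_span (by simp)) (subset_span (by simp))
  · rw [eSet, Nat.sub_eq_zero_iff_le] at hind ⊢
    omega

theorem exists_linearly_independent_elementary_increasing
    {K : Type*} [Field K] [Infinite K] {k : ℕ} {n : Fin k → ℕ}
    (hk : 0 < k) (hn : ∀ i, 0 < n i)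
    (S : Set (MultiProj K n)) (hSfin : S.Finite) (hSne : S.Nonempty)
    (hind : eSet S = 0) (i : Fin k)
    (hnospan : Submodule.span K ((fun x => (x i).rep) '' S) ≠ ⊤) :
    ∃ o ∈ S, ∃ o' o'' : MultiProj K n,
      o' ≠ o'' ∧
      (∀ j, j ≠ i → o' j = o j ∧ o'' j = o j) ∧
      o i ≠ o' i ∧ o i ≠ o'' i ∧ o' i ≠ o'' i ∧
      (∃ W : Submodule K (Fin (n i + 1) → K), Module.finrank K ↥W = 2 ∧
        (o i).rep ∈ W ∧ (o' i).rep ∈ W ∧ (o'' i).rep ∈ W) ∧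
      ((S \ {o}) ∪ {o', o''}).ncard = S.ncard + 1 ∧
      eSet ((S \ {o}) ∪ {o', o''}) = 0 :=
  exists_linearly_independent_elementary_increasing_general S hSfin hSne hind i hnospan
end
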